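/- arXiv:2309.10971 — 8 statements merged into one kernel-verified Lean document; each statement's English description precedes it below -/
import Mathlib

section
/- Let 0 < s < 1/4, let d ≥ 1 and let C > 0. For every M > 0 there exist a real number λ ≥ M and a real number κ ≥ C·λ^s such that any two distinct integer lattice points k, ℓ ∈ ℤ² satisfying λ ≤ |k|² ≤ λ + κ and λ ≤ |ℓ|² ≤ λ + κ must satisfy |k − ℓ| > d. -/
set_option maxHeartbeats 1000000

open Finset Filter Real

/-- Sparse distribution of lattice points in annuli in ℝ²:
for `0 < s < 1/4`, `d ≥ 1`, `C > 0`, there exist arbitrarily large `λ` and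
`κ ≥ C·λ^s` such that any two distinct lattice points in the annulus
`{x : λ ≤ |x|² ≤ λ + κ}` are at distance `> d`. -/
theorem sparse_lattice_annulus_2D (s : ℝ) (hs0 : 0 < s) (hs1 : s < 1/4)
    (d : ℝ) (hd : 1 ≤ d) (C : ℝ) (hC : 0 < C) :
    ∀ M : ℝ, 0 < M → ∃ lam : ℝ, M ≤ lam ∧ ∃ kap : ℝ, C * lam ^ s ≤ kap ∧
      ∀ k l : ℤ × ℤ, k ≠ l →
        lam ≤ ((k.1 : ℝ)^2 + (k.2 : ℝ)^2) → ((k.1 : ℝ)^2 + (k.2 : ℝ)^2) ≤ lam + kap →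
        lam ≤ ((l.1 : ℝ)^2 + (l.2 : ℝ)^2) → ((l.1 : ℝ)^2 + (l.2 : ℝ)^2) ≤ lam + kap →
        d < Real.sqrt (((k.1 : ℝ) - (l.1 : ℝ))^2 + ((k.2 : ℝ) - (l.2 : ℝ))^2) := by
  intro M hM
  set A : ℝ := (5*d)^2 * 7 * (4*C+1) * (2*C+1) with hA
  -- choose a large integer n
  have h1 : Tendsto (fun x : ℝ => x ^ (1 - s)) atTop atTop :=
    tendsto_rpow_atTop (by linarith)
  have h2 : Tendsto (fun x : ℝ => x ^ (1/2 - 2*s)) atTop atTop :=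
    tendsto_rpow_atTop (by linarith)
  have h1n : Tendsto (fun n : ℕ => (n:ℝ) ^ (1 - s)) atTop atTop :=
    h1.comp tendsto_natCast_atTop_atTop
  have h2n : Tendsto (fun n : ℕ => (n:ℝ) ^ (1/2 - 2*s)) atTop atTop :=
    h2.comp tendsto_natCast_atTop_atTop
  have hev : ∀ᶠ n : ℕ in atTop,
      2*C ≤ (n:ℝ)^(1-s) ∧ A < (n:ℝ)^(1/2-2*s) ∧ M ≤ (n:ℝ) ∧ 1 ≤ (n:ℝ) := by
    filter_upwards [h1n.eventually_ge_atTop (2*C), h2n.eventually_gt_atTop A,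
      (tendsto_natCast_atTop_atTop (R := ℝ)).eventually_ge_atTop M,
      (tendsto_natCast_atTop_atTop (R := ℝ)).eventually_ge_atTop 1] with n a b c e
    exact ⟨a, b, c, e⟩
  obtain ⟨n, hc1, hc2, hcM, hn1⟩ := hev.exists
  have hn0 : (0:ℝ) < n := by linarith
  -- set up kappa and the integer bounds
  set κ : ℝ := C * (2*(n:ℝ)) ^ s with hκdef
  have h2n1 : (1:ℝ) ≤ 2*(n:ℝ) := by linarith
  have hκ0 : 0 < κ := by positivity
  have hns1 : (1:ℝ) ≤ (n:ℝ) ^ s := Real.one_le_rpow hn1 hs0.le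
  have hκle : κ ≤ 2*C*(n:ℝ)^s := by
    have : (2*(n:ℝ))^s = 2^s * (n:ℝ)^s := Real.mul_rpow (by norm_num) hn0.le
    have h2s : (2:ℝ)^s ≤ 2 := by
      calc (2:ℝ)^s ≤ 2^(1:ℝ) := Real.rpow_le_rpow_of_exponent_le (by norm_num) (by linarith)
      _ = 2 := by norm_num
    rw [hκdef, this]
    have h0 := Real.rpow_nonneg (le_of_lt hn0) s
    nlinarith [mul_le_mul_of_nonneg_right h2s (mul_nonneg hC.le h0)]
  have hκlen : κ ≤ (n:ℝ) := by
    have : 2*C*(n:ℝ)^s ≤ (n:ℝ)^(1-s) * (n:ℝ)^s := by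
      have := Real.rpow_nonneg (le_of_lt hn0) s
      nlinarith
    have hh : (n:ℝ)^(1-s) * (n:ℝ)^s = (n:ℝ) := by
      rw [← Real.rpow_add hn0]; norm_num
    linarith [hκle, hh ▸ this]
  set K : ℤ := ⌊κ⌋ with hK
  set D : ℤ := ⌈d⌉ with hD
  set S : ℤ := ⌈Real.sqrt (2*(n:ℝ) + κ)⌉ with hS
  have hK0 : 0 ≤ K := Int.le_floor.2 (by simpa using hκ0.le)
  have hDd : d ≤ (D:ℝ) := Int.le_ceil d
  have hD1 : 1 ≤ D := by
    have : (1:ℝ) ≤ (D:ℝ) := le_trans hd hDd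
    exact_mod_cast this
  have hSsq : Real.sqrt (2*(n:ℝ) + κ) ≤ (S:ℝ) := Int.le_ceil _
  have hS0 : 0 ≤ S := by
    have : (0:ℝ) ≤ (S:ℝ) := le_trans (Real.sqrt_nonneg _) hSsq
    exact_mod_cast this
  have hnint : (n:ℤ) ≤ 2*(n:ℤ) := by omega
  -- key claim: some integer lam in [n, 2n] is good
  have key : ∃ lam : ℤ, (n:ℤ) ≤ lam ∧ lam ≤ 2*(n:ℤ) ∧
      ∀ k l : ℤ × ℤ, k ≠ l →
        (lam:ℝ) ≤ ((k.1 : ℝ)^2 + (k.2 : ℝ)^2) → ((k.1 : ℝ)^2 + (k.2 : ℝ)^2) ≤ lam + κ →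
        (lam:ℝ) ≤ ((l.1 : ℝ)^2 + (l.2 : ℝ)^2) → ((l.1 : ℝ)^2 + (l.2 : ℝ)^2) ≤ lam + κ →
        d < Real.sqrt (((k.1 : ℝ) - (l.1 : ℝ))^2 + ((k.2 : ℝ) - (l.2 : ℝ))^2) := by
    by_contra hcon
    push_neg at hcon
    -- normalized witnesses with (l-k).2 ≠ 0
    have Hw : ∀ lam ∈ Finset.Icc (n:ℤ) (2*(n:ℤ)), ∃ k l : ℤ × ℤ,
        (l - k).2 ≠ 0 ∧
        ((l.1:ℝ) - (k.1:ℝ))^2 + ((l.2:ℝ) - (k.2:ℝ))^2 ≤ d^2 ∧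
        (lam:ℝ) ≤ (k.1:ℝ)^2 + (k.2:ℝ)^2 ∧ (k.1:ℝ)^2 + (k.2:ℝ)^2 ≤ lam + κ ∧
        (lam:ℝ) ≤ (l.1:ℝ)^2 + (l.2:ℝ)^2 ∧ (l.1:ℝ)^2 + (l.2:ℝ)^2 ≤ lam + κ := by
      intro lam hlam
      rw [Finset.mem_Icc] at hlam
      obtain ⟨k, l, hkl, a1, a2, a3, a4, hdist⟩ := hcon lam hlam.1 hlam.2
      have hle : ((k.1:ℝ) - (l.1:ℝ))^2 + ((k.2:ℝ) - (l.2:ℝ))^2 ≤ d^2 := by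
        have h0 : (0:ℝ) ≤ ((k.1:ℝ) - (l.1:ℝ))^2 + ((k.2:ℝ) - (l.2:ℝ))^2 := by positivity
        nlinarith [Real.sq_sqrt h0, Real.sqrt_nonneg (((k.1:ℝ) - (l.1:ℝ))^2 + ((k.2:ℝ) - (l.2:ℝ))^2)]
      by_cases h2 : (l - k).2 = 0
      · -- swap coordinates
        have h1 : (l - k).1 ≠ 0 := by
          intro h1
          apply hkl
          have : l - k = 0 := Prod.ext h1 h2
          have := sub_eq_zero.1 this
          exact this.symm
        refine ⟨⟨k.2, k.1⟩, ⟨l.2, l.1⟩, ?_, ?_, ?_, ?_, ?_, ?_⟩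
        · simpa using h1
        · simp only
          nlinarith [hle]
        · simp only; linarith [a1]
        · simp only; linarith [a2]
        · simp only; linarith [a3]
        · simp only; linarith [a4]
      · refine ⟨k, l, h2, ?_, a1, a2, a3, a4⟩
        nlinarith [hle]
    choose! kk ll hv hdist2 hk1 hk2 hl1 hl2 using Hw
    -- the encoding map
    set f : ℤ → (ℤ × ℤ) × ℤ × ℤ × ℤ := fun lam =>
      (ll lam - kk lam, (kk lam).1,
        ((ll lam).1^2 + (ll lam).2^2) - ((kk lam).1^2 + (kk lam).2^2),
        ((kk lam).1^2 + (kk lam).2^2) - lam) with hf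
    set tgt : Finset ((ℤ × ℤ) × ℤ × ℤ × ℤ) :=
      (Finset.Icc (-D) D ×ˢ Finset.Icc (-D) D) ×ˢ
        Finset.Icc (-S) S ×ˢ Finset.Icc (-K) K ×ˢ Finset.Icc 0 K with htgt
    have habs : ∀ x y : ℝ, 0 ≤ y → x^2 ≤ y^2 → |x| ≤ y := by
      intro x y hy h
      have := Real.sqrt_le_sqrt h
      rwa [Real.sqrt_sq_eq_abs, Real.sqrt_sq hy] at this
    have hmaps : ∀ lam ∈ Finset.Icc (n:ℤ) (2*(n:ℤ)), f lam ∈ tgt := by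
      intro lam hlam
      have hlam' := Finset.mem_Icc.1 hlam
      have hlamR : (lam:ℝ) ≤ 2*(n:ℝ) := by exact_mod_cast hlam'.2
      have B2 := hdist2 lam hlam
      have Bk1 := hk1 lam hlam
      have Bk2 := hk2 lam hlam
      have Bl1 := hl1 lam hlam
      have Bl2 := hl2 lam hlam
      simp only [htgt, hf, Finset.mem_product, Finset.mem_Icc]
      set k := kk lam with hkdef
      set l := ll lam with hldef
      refine ⟨⟨?_, ?_⟩, ?_, ?_, ?_⟩
      · -- v.1 bounds
        have : |((l.1 - k.1 : ℤ):ℝ)| ≤ d := by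
          apply habs _ _ (by linarith)
          push_cast
          nlinarith [B2]
        have : |(l.1 - k.1 : ℤ)| ≤ D := by
          have h2 : ((|l.1 - k.1| : ℤ) : ℝ) ≤ (D:ℝ) := by
            rw [Int.cast_abs]; exact le_trans this hDd
          exact_mod_cast h2
        have := abs_le.1 this
        simpa using this
      · -- v.2 bounds
        have : |((l.2 - k.2 : ℤ):ℝ)| ≤ d := by
          apply habs _ _ (by linarith)
          push_cast
          nlinarith [B2]
        have : |(l.2 - k.2 : ℤ)| ≤ D := by
          have h2 : ((|l.2 - k.2| : ℤ) : ℝ) ≤ (D:ℝ) := by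
            rw [Int.cast_abs]; exact le_trans this hDd
          exact_mod_cast h2
        have := abs_le.1 this
        simpa using this
      · -- k.1 bounds
        have : |((k.1 : ℤ):ℝ)| ≤ Real.sqrt (2*(n:ℝ) + κ) := by
          apply Real.abs_le_sqrt
          nlinarith [sq_nonneg ((k.2:ℤ):ℝ)]
        have h3 : |(k.1 : ℤ)| ≤ S := by
          have h2 : ((|k.1| : ℤ) : ℝ) ≤ (S:ℝ) := by
            rw [Int.cast_abs]; exact le_trans this hSsq
          exact_mod_cast h2
        exact abs_le.1 h3
      · -- m bounds
        have hm : |(((l.1^2 + l.2^2) - (k.1^2 + k.2^2) : ℤ) : ℝ)| ≤ κ := by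
          rw [abs_le]
          constructor <;> push_cast <;> nlinarith
        rw [abs_le] at hm
        constructor
        · have : (-K : ℤ) ≤ (l.1^2 + l.2^2) - (k.1^2 + k.2^2) := by
            have : -((l.1^2 + l.2^2) - (k.1^2 + k.2^2)) ≤ K := by
              apply Int.le_floor.2
              push_cast
              push_cast at hm
              linarith [hm.1]
            linarith
          exact this
        · apply Int.le_floor.2
          push_cast
          push_cast at hm
          linarith [hm.2]
      · -- r bounds
        constructor
        · have : (lam:ℝ) ≤ ((k.1^2 + k.2^2 : ℤ) : ℝ) := by push_cast; linarith
          have : lam ≤ k.1^2 + k.2^2 := by exact_mod_cast this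
          omega
        · apply Int.le_floor.2
          push_cast
          linarith
    have hinj : Set.InjOn f (Finset.Icc (n:ℤ) (2*(n:ℤ))) := by
      intro a ha b hb hab
      simp only [hf, Prod.mk.injEq] at hab
      obtain ⟨hveq, h1eq, hmeq, hreq⟩ := hab
      have hv2 : (ll a - kk a).2 = (ll b - kk b).2 := by rw [hveq]
      have hv1 : (ll a - kk a).1 = (ll b - kk b).1 := by rw [hveq]
      have hva := hv a ha
      -- identity: m = 2 k·v + |v|²
      have idm : ∀ μ, ((ll μ).1^2 + (ll μ).2^2) - ((kk μ).1^2 + (kk μ).2^2)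
          = 2*(kk μ).1*((ll μ - kk μ).1) + 2*(kk μ).2*((ll μ - kk μ).2)
            + ((ll μ - kk μ).1)^2 + ((ll μ - kk μ).2)^2 := by
        intro μ
        simp only [Prod.snd_sub, Prod.fst_sub]
        ring
      have := idm a
      rw [hmeq, idm b, hv1, hv2, h1eq] at this
      have hk2eq : (kk a).2 = (kk b).2 := by
        have hvb2 : (ll b - kk b).2 ≠ 0 := hv b hb
        have : 2*(kk a).2*((ll b - kk b).2) = 2*(kk b).2*((ll b - kk b).2) := by linarith
        have := mul_right_cancel₀ hvb2 this
        linarith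
      have hkeq : kk a = kk b := Prod.ext h1eq hk2eq
      have hNk : (kk a).1^2 + (kk a).2^2 = (kk b).1^2 + (kk b).2^2 := by rw [hkeq]
      linarith [hreq, hNk]
    have hcard := Finset.card_le_card_of_injOn f hmaps hinj
    -- compute cardinalities
    have cIcc : ∀ a b : ℤ, a ≤ b → (((Finset.Icc a b).card : ℕ) : ℝ) = (b:ℝ) - a + 1 := by
      intro a b hab
      have h1 : ((Finset.Icc a b).card : ℤ) = b - a + 1 := by rw [Int.card_Icc]; omega
      have h2 : (((Finset.Icc a b).card : ℤ) : ℝ) = (b:ℝ) - a + 1 := by rw [h1]; push_cast; ring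
      exact_mod_cast h2
    have hKle : (K:ℝ) ≤ κ := Int.floor_le κ
    have hKneg : (-K : ℤ) ≤ K := by omega
    have hSneg : (-S : ℤ) ≤ S := by omega
    have hDneg : (-D : ℤ) ≤ D := by omega
    have hsrc : (((Finset.Icc (n:ℤ) (2*(n:ℤ))).card : ℕ) : ℝ) = (n:ℝ) + 1 := by
      rw [cIcc _ _ hnint]; push_cast; ring
    have cD : (((Finset.Icc (-D) D).card : ℕ) : ℤ) = 2*D+1 := by rw [Int.card_Icc]; omega
    have cS : (((Finset.Icc (-S) S).card : ℕ) : ℤ) = 2*S+1 := by rw [Int.card_Icc]; omega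
    have cK : (((Finset.Icc (-K) K).card : ℕ) : ℤ) = 2*K+1 := by rw [Int.card_Icc]; omega
    have cK0 : (((Finset.Icc (0:ℤ) K).card : ℕ) : ℤ) = K+1 := by rw [Int.card_Icc]; omega
    have htgtInt : ((tgt.card : ℕ) : ℤ)
        = ((2*D+1) * (2*D+1)) * ((2*S+1) * ((2*K+1) * (K+1))) := by
      simp only [htgt, Finset.card_product]
      push_cast [cD, cS, cK, cK0]
      ring
    have htgtcard : ((tgt.card : ℕ) : ℝ)
        = (2*(D:ℝ)+1) * (2*(D:ℝ)+1) * ((2*(S:ℝ)+1) * ((2*(K:ℝ)+1) * ((K:ℝ)+1))) := by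
      have : (((tgt.card : ℕ) : ℤ) : ℝ)
          = (2*(D:ℝ)+1) * (2*(D:ℝ)+1) * ((2*(S:ℝ)+1) * ((2*(K:ℝ)+1) * ((K:ℝ)+1))) := by
        rw [htgtInt]; push_cast; ring
      exact_mod_cast this
    have hcardR : (n:ℝ) + 1 ≤ (2*(D:ℝ)+1) * (2*(D:ℝ)+1) * ((2*(S:ℝ)+1) * ((2*(K:ℝ)+1) * ((K:ℝ)+1))) := by
      rw [← hsrc, ← htgtcard]
      exact_mod_cast hcard
    clear hcard htgtInt htgtcard hsrc cIcc cD cS cK cK0 hmaps hinj hcon hv hdist2 hk1 hk2 hl1 hl2 hf htgt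
    clear f tgt kk ll
    -- now the numeric contradiction
    have hsqrtn1 : (1:ℝ) ≤ Real.sqrt n := by
      rw [show (1:ℝ) = Real.sqrt 1 by simp]
      exact Real.sqrt_le_sqrt hn1
    have hDb : (D:ℝ) < d + 1 := Int.ceil_lt_add_one d
    have hSb : (S:ℝ) < 2 * Real.sqrt n + 1 := by
      have h1 : Real.sqrt (2*(n:ℝ) + κ) ≤ 2 * Real.sqrt n := by
        have h2 : 2*(n:ℝ) + κ ≤ 4 * n := by linarith
        calc Real.sqrt (2*(n:ℝ) + κ) ≤ Real.sqrt (4*n) := Real.sqrt_le_sqrt h2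
          _ = 2 * Real.sqrt n := by
            rw [show (4:ℝ)*n = 2^2 * n by ring, Real.sqrt_mul (by positivity) n,
              Real.sqrt_sq (by norm_num)]
      calc (S:ℝ) < Real.sqrt (2*(n:ℝ) + κ) + 1 := Int.ceil_lt_add_one _
        _ ≤ 2 * Real.sqrt n + 1 := by linarith
    have hbound : (2*(D:ℝ)+1) * (2*(D:ℝ)+1) * ((2*(S:ℝ)+1) * ((2*(K:ℝ)+1) * ((K:ℝ)+1)))
        ≤ (5*d) * (5*d) * ((7 * Real.sqrt n) * (((4*C+1) * (n:ℝ)^s) * ((2*C+1) * (n:ℝ)^s))) := by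
      have f1 : 2*(D:ℝ)+1 ≤ 5*d := by linarith
      have f2 : 2*(S:ℝ)+1 ≤ 7 * Real.sqrt n := by linarith
      have f3 : 2*(K:ℝ)+1 ≤ (4*C+1) * (n:ℝ)^s := by nlinarith [hKle, hκle, hns1]
      have f4 : (K:ℝ)+1 ≤ (2*C+1) * (n:ℝ)^s := by nlinarith [hKle, hκle, hns1]
      have p1 : (0:ℝ) ≤ 2*(D:ℝ)+1 := by
        have : (1:ℝ) ≤ (D:ℝ) := by exact_mod_cast hD1
        linarith
      have p2 : (0:ℝ) ≤ 2*(S:ℝ)+1 := by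
        have : (0:ℝ) ≤ (S:ℝ) := by exact_mod_cast hS0
        linarith
      have p3 : (0:ℝ) ≤ 2*(K:ℝ)+1 := by
        have : (0:ℝ) ≤ (K:ℝ) := by exact_mod_cast hK0
        linarith
      have p4 : (0:ℝ) ≤ (K:ℝ)+1 := by
        have : (0:ℝ) ≤ (K:ℝ) := by exact_mod_cast hK0
        linarith
      gcongr <;> first | positivity | linarith | assumption
    have hfinal : (5*d) * (5*d) * ((7 * Real.sqrt n) * (((4*C+1) * (n:ℝ)^s) * ((2*C+1) * (n:ℝ)^s)))
        < (n:ℝ) := by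
      have hsq : Real.sqrt n = (n:ℝ)^((1:ℝ)/2) := Real.sqrt_eq_rpow n
      have hprod : Real.sqrt n * ((n:ℝ)^s * (n:ℝ)^s) = (n:ℝ)^((1:ℝ)/2 + 2*s) := by
        rw [hsq, ← Real.rpow_add hn0, ← Real.rpow_add hn0]
        ring_nf
      have hsplit : (n:ℝ) = (n:ℝ)^((1:ℝ)/2 - 2*s) * (n:ℝ)^((1:ℝ)/2 + 2*s) := by
        rw [← Real.rpow_add hn0]
        norm_num
      have hpos : (0:ℝ) < (n:ℝ)^((1:ℝ)/2 + 2*s) := Real.rpow_pos_of_pos hn0 _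
      calc (5*d) * (5*d) * ((7 * Real.sqrt n) * (((4*C+1) * (n:ℝ)^s) * ((2*C+1) * (n:ℝ)^s)))
          = A * (Real.sqrt n * ((n:ℝ)^s * (n:ℝ)^s)) := by rw [hA]; ring
        _ = A * (n:ℝ)^((1:ℝ)/2 + 2*s) := by rw [hprod]
        _ < (n:ℝ)^((1:ℝ)/2 - 2*s) * (n:ℝ)^((1:ℝ)/2 + 2*s) := by
            exact mul_lt_mul_of_pos_right hc2 hpos
        _ = (n:ℝ) := hsplit.symm
    linarith
  obtain ⟨lam, hl1, hl2, hgood⟩ := key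
  refine ⟨(lam:ℝ), ?_, κ, ?_, ?_⟩
  · have : (n:ℝ) ≤ (lam:ℝ) := by exact_mod_cast hl1
    linarith
  · rw [hκdef]
    have hlamnn : (0:ℝ) ≤ (lam:ℝ) := by
      have : (n:ℝ) ≤ (lam:ℝ) := by exact_mod_cast hl1
      linarith
    have hle2n : (lam:ℝ) ≤ 2*(n:ℝ) := by exact_mod_cast hl2
    have := Real.rpow_le_rpow hlamnn hle2n hs0.le
    nlinarith [this]
  · exact hgood
end

section
/- Let α > 4√2. There exists Λ > 0 such that for every real number λ ≥ Λ, there exist two integer lattice points k, ℓ ∈ ℤ² with |k − ℓ| = 1 such that λ ≤ |k|² ≤ λ + α·λ^{1/4} and λ ≤ |ℓ|² ≤ λ + α·λ^{1/4}. -/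
set_option maxHeartbeats 1000000


/-- For `α > 4√2` and all sufficiently large `λ`, the annulus
`{x ∈ ℝ² : λ ≤ |x|² ≤ λ + α·λ^{1/4}}` contains two lattice points at distance 1. -/
theorem annulus_2D_two_close_lattice_points (α : ℝ) (hα : α > 4 * Real.sqrt 2) :
    ∃ Λ : ℝ, 0 < Λ ∧ ∀ lam : ℝ, Λ ≤ lam →
      ∃ k l : ℤ × ℤ,
        Real.sqrt (((k.1 : ℝ) - (l.1 : ℝ))^2 + ((k.2 : ℝ) - (l.2 : ℝ))^2) = 1 ∧
        lam ≤ ((k.1 : ℝ)^2 + (k.2 : ℝ)^2) ∧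
        ((k.1 : ℝ)^2 + (k.2 : ℝ)^2) ≤ lam + α * lam ^ ((1 : ℝ)/4) ∧
        lam ≤ ((l.1 : ℝ)^2 + (l.2 : ℝ)^2) ∧
        ((l.1 : ℝ)^2 + (l.2 : ℝ)^2) ≤ lam + α * lam ^ ((1 : ℝ)/4) := by
  set δ : ℝ := α - 4 * Real.sqrt 2 with hδdef
  have hδ : 0 < δ := by simp only [hδdef]; linarith
  refine ⟨max 1 ((8/δ)^4), lt_of_lt_of_le one_pos (le_max_left _ _), ?_⟩
  intro lam hlam
  have hlam1 : (1:ℝ) ≤ lam := le_trans (le_max_left _ _) hlam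
  have hlam0 : (0:ℝ) ≤ lam := by linarith
  set s := Real.sqrt lam with hs
  have hs1 : 1 ≤ s := by
    rw [hs, show (1:ℝ) = Real.sqrt 1 by simp]
    exact Real.sqrt_le_sqrt hlam1
  have hs2 : s^2 = lam := Real.sq_sqrt hlam0
  set a : ℤ := ⌊s⌋ with ha
  have ha1 : (1:ℝ) ≤ (a:ℝ) := by
    have : (1:ℤ) ≤ a := Int.le_floor.mpr (by exact_mod_cast hs1)
    exact_mod_cast this
  have haub : (a:ℝ) ≤ s := Int.floor_le s
  have halb : s < (a:ℝ) + 1 := Int.lt_floor_add_one s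
  have ha2 : (a:ℝ)^2 ≤ lam := by nlinarith
  set t : ℝ := lam - (a:ℝ)^2 with htdef
  have ht0 : 0 ≤ t := by simp [htdef]; linarith
  have ht : t ≤ 2*s + 1 := by nlinarith
  set u := Real.sqrt t with hu
  have hu0 : 0 ≤ u := Real.sqrt_nonneg t
  have hu2 : u^2 = t := Real.sq_sqrt ht0
  set b : ℤ := ⌈u⌉ with hb
  have hb0 : (0:ℝ) ≤ (b:ℝ) := by
    have : (0:ℤ) ≤ b := Int.ceil_nonneg hu0
    exact_mod_cast this
  have hblb : u ≤ (b:ℝ) := Int.le_ceil u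
  have hbub : (b:ℝ) < u + 1 := Int.ceil_lt_add_one u
  -- quarter power
  set q : ℝ := lam ^ ((1:ℝ)/4) with hq
  have hq0 : 0 ≤ q := Real.rpow_nonneg hlam0 _
  have hqs : q^2 = s := by
    rw [hq, hs, Real.sqrt_eq_rpow, ← Real.rpow_natCast (lam ^ ((1:ℝ)/4)) 2,
      ← Real.rpow_mul hlam0]
    norm_num
  -- lower bound on q
  have hqδ : 8/δ ≤ q := by
    have h1 : ((8/δ)^4 : ℝ) ^ ((1:ℝ)/4) = 8/δ := by
      rw [← Real.rpow_natCast (8/δ) 4, ← Real.rpow_mul (by positivity)]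
      norm_num
    have h2 : ((8/δ)^4 : ℝ) ^ ((1:ℝ)/4) ≤ lam ^ ((1:ℝ)/4) :=
      Real.rpow_le_rpow (by positivity) (le_trans (le_max_right _ _) hlam) (by norm_num)
    rw [h1] at h2
    exact h2
  have hδq : 8 ≤ δ * q := by
    have := mul_le_mul_of_nonneg_left hqδ hδ.le
    rw [mul_div_cancel₀ _ (ne_of_gt hδ)] at this
    linarith [this]
  have hsqrt2 : Real.sqrt 2 ^ 2 = 2 := Real.sq_sqrt (by norm_num)
  have hsqrt2nn : 0 ≤ Real.sqrt 2 := Real.sqrt_nonneg 2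
  -- u ≤ √2 q + 1
  have huq : u ≤ Real.sqrt 2 * q + 1 := by
    have h1 : t ≤ (Real.sqrt 2 * q + 1)^2 := by nlinarith
    calc u ≤ Real.sqrt ((Real.sqrt 2 * q + 1)^2) := Real.sqrt_le_sqrt h1
      _ = Real.sqrt 2 * q + 1 := Real.sqrt_sq (by positivity)
  have hbb : (b:ℝ)^2 ≤ t + 2*u + 1 := by nlinarith
  have hbl : t ≤ (b:ℝ)^2 := by nlinarith
  refine ⟨(a, b+1), (a, b), ?_, ?_, ?_, ?_, ?_⟩
  · push_cast
    rw [show ((a:ℝ) - a)^2 + (((b:ℝ)+1) - b)^2 = 1 by ring, Real.sqrt_one]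
  · push_cast
    nlinarith
  · push_cast
    have key : 4 * Real.sqrt 2 * q + 8 ≤ α * q := by
      simp only [hδdef] at hδq
      nlinarith
    nlinarith
  · push_cast
    nlinarith
  · push_cast
    have key : 4 * Real.sqrt 2 * q + 8 ≤ α * q := by
      simp only [hδdef] at hδq
      nlinarith
    nlinarith
end

section
/- Let C > 4·8^{1/4}. There exists M > 0 such that for every real number m ≥ M, there exist two integer lattice points k, ℓ ∈ ℤ³ with |k − ℓ| = 1 such that m ≤ |k|² ≤ m + C·m^{1/8} and m ≤ |ℓ|² ≤ m + C·m^{1/8}. -/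
/-- If `0 ≤ y ≤ x < y + 1` then `x² - y² ≤ 2x`. -/
lemma shell3D_aux_sq_gap (x y : ℝ) (h0 : 0 ≤ y) (h1 : y ≤ x) (h2 : x < y + 1) :
    x ^ 2 - y ^ 2 ≤ 2 * x := by nlinarith

/-- For `C > 4·8^{1/4}` and all sufficiently large `m`, the spherical shell
`{x ∈ ℝ³ : m ≤ |x|² ≤ m + C·m^{1/8}}` contains two lattice points at distance 1. -/
theorem shell_3D_two_close_lattice_points (C : ℝ) (hC : C > 4 * (8 : ℝ) ^ ((1 : ℝ)/4)) :
    ∃ M : ℝ, 0 < M ∧ ∀ m : ℝ, M ≤ m →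
      ∃ k l : ℤ × ℤ × ℤ,
        Real.sqrt (((k.1 : ℝ) - (l.1 : ℝ))^2 + ((k.2.1 : ℝ) - (l.2.1 : ℝ))^2
          + ((k.2.2 : ℝ) - (l.2.2 : ℝ))^2) = 1 ∧
        m ≤ ((k.1 : ℝ)^2 + (k.2.1 : ℝ)^2 + (k.2.2 : ℝ)^2) ∧
        ((k.1 : ℝ)^2 + (k.2.1 : ℝ)^2 + (k.2.2 : ℝ)^2) ≤ m + C * m ^ ((1 : ℝ)/8) ∧
        m ≤ ((l.1 : ℝ)^2 + (l.2.1 : ℝ)^2 + (l.2.2 : ℝ)^2) ∧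
        ((l.1 : ℝ)^2 + (l.2.1 : ℝ)^2 + (l.2.2 : ℝ)^2) ≤ m + C * m ^ ((1 : ℝ)/8) := by
  set D : ℝ := (8 : ℝ) ^ ((1:ℝ)/4) with hD
  have hD0 : 0 < D := Real.rpow_pos_of_pos (by norm_num) _
  have hD4 : D ^ 4 = 8 := by
    rw [hD, ← Real.rpow_natCast ((8:ℝ) ^ ((1:ℝ)/4)) 4, ← Real.rpow_mul (by norm_num)]
    norm_num
  set ε : ℝ := C - 4 * D with hε
  have hε0 : 0 < ε := by simp only [hε]; linarith
  have hM1 : (1:ℝ) ≤ 1 + 4/ε := by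
    have h4 : 0 < 4/ε := by positivity
    linarith
  refine ⟨(1 + 4/ε)^8, by positivity, fun m hm => ?_⟩
  have hm1 : (1:ℝ) ≤ m := by
    have h18 : (1:ℝ) ≤ (1 + 4/ε)^8 := by
      have := pow_le_pow_left₀ (by norm_num : (0:ℝ) ≤ 1) hM1 8
      simpa using this
    linarith
  have hm0 : (0:ℝ) ≤ m := by linarith
  set u : ℝ := m ^ ((1:ℝ)/8) with hu
  have hu0 : 0 < u := Real.rpow_pos_of_pos (by linarith) _
  have huM : 1 + 4/ε ≤ u := by
    have h := Real.rpow_le_rpow (by positivity) hm (by norm_num : (0:ℝ) ≤ 1/8)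
    rwa [← Real.rpow_natCast (1 + 4/ε) 8, ← Real.rpow_mul (by positivity),
      show ((8:ℕ):ℝ) * (1/8) = 1 by norm_num, Real.rpow_one] at h
  have hεu : 4 ≤ ε * u := by
    have h1 : ε * (1 + 4/ε) ≤ ε * u := mul_le_mul_of_nonneg_left huM hε0.le
    have h2 : ε * (1 + 4/ε) = ε + 4 := by field_simp
    rw [h2] at h1
    linarith
  have hsmu : Real.sqrt m = u ^ 4 := by
    rw [hu, ← Real.rpow_natCast (m ^ ((1:ℝ)/8)) 4, ← Real.rpow_mul hm0,
      show (1:ℝ)/8 * ((4:ℕ):ℝ) = 1/2 by norm_num, Real.sqrt_eq_rpow]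
  set sm : ℝ := Real.sqrt m with hsm
  have hsm0 : 0 ≤ sm := Real.sqrt_nonneg m
  have hsm2 : sm ^ 2 = m := Real.sq_sqrt hm0
  have hsm1 : 1 ≤ sm := by
    rw [hsm, show (1:ℝ) = Real.sqrt 1 by simp]
    exact Real.sqrt_le_sqrt hm1
  set a : ℕ := ⌊sm⌋₊ with ha
  have ha1 : (a:ℝ) ≤ sm := Nat.floor_le hsm0
  have ha2 : sm < a + 1 := Nat.lt_floor_add_one sm
  have ha0 : (0:ℝ) ≤ (a:ℝ) := Nat.cast_nonneg a
  set r : ℝ := m - (a:ℝ)^2 with hr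
  have hr0 : 0 ≤ r := by
    have := pow_le_pow_left₀ ha0 ha1 2
    simp only [hr]; linarith
  have hr2 : r ≤ 2 * sm := by
    have := shell3D_aux_sq_gap sm (a:ℝ) ha0 ha1 ha2
    simp only [hr]; linarith
  set sr : ℝ := Real.sqrt r with hsr
  have hsr0 : 0 ≤ sr := Real.sqrt_nonneg r
  have hsr2 : sr ^ 2 = r := Real.sq_sqrt hr0
  set b : ℕ := ⌊sr⌋₊ with hb
  have hb1 : (b:ℝ) ≤ sr := Nat.floor_le hsr0
  have hb2 : sr < b + 1 := Nat.lt_floor_add_one sr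
  have hb0 : (0:ℝ) ≤ (b:ℝ) := Nat.cast_nonneg b
  set s : ℝ := r - (b:ℝ)^2 with hs
  have hs0 : 0 ≤ s := by
    have := pow_le_pow_left₀ hb0 hb1 2
    simp only [hs]; linarith
  have hs2 : s ≤ 2 * sr := by
    have := shell3D_aux_sq_gap sr (b:ℝ) hb0 hb1 hb2
    simp only [hs]; linarith
  set ss : ℝ := Real.sqrt s with hss
  have hss0 : 0 ≤ ss := Real.sqrt_nonneg s
  have hss2 : ss ^ 2 = s := Real.sq_sqrt hs0
  set c : ℕ := ⌈ss⌉₊ with hc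
  have hc1 : ss ≤ (c:ℝ) := Nat.le_ceil ss
  have hc2 : (c:ℝ) < ss + 1 := Nat.ceil_lt_add_one hss0
  have hc0 : (0:ℝ) ≤ (c:ℝ) := Nat.cast_nonneg c
  -- key bound : ss ≤ D * u
  have hsr_le : 2 * sr ≤ D^2 * u^2 := by
    have hsq : (2 * sr)^2 ≤ (D^2 * u^2)^2 := by
      have e1 : (2 * sr)^2 = 4 * r := by rw [← hsr2]; ring
      have e2 : (D^2 * u^2)^2 = 8 * u^4 := by rw [← hD4]; ring
      have e3 : (8:ℝ) * sm = 8 * u^4 := by rw [hsmu]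
      rw [e1, e2]
      linarith
    have h := Real.sqrt_le_sqrt hsq
    rwa [Real.sqrt_sq (by positivity), Real.sqrt_sq (by positivity)] at h
  have hss_le : ss ≤ D * u := by
    have hsq : ss^2 ≤ (D * u)^2 := by
      have e2 : (D * u)^2 = D^2 * u^2 := by ring
      rw [hss2, e2]
      linarith
    have h := Real.sqrt_le_sqrt hsq
    rwa [Real.sqrt_sq hss0, Real.sqrt_sq (by positivity)] at h
  have hCu : C * u = ε * u + 4 * (D * u) := by rw [hε]; ring
  have h4ss : 4 * ss ≤ 4 * (D * u) := by linarith
  -- square comparisons for c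
  have hq1 : s ≤ (c:ℝ)^2 := by
    have := pow_le_pow_left₀ hss0 hc1 2
    linarith
  have hq2 : (c:ℝ)^2 ≤ s + 2*ss + 1 := by
    have h := pow_le_pow_left₀ hc0 hc2.le 2
    have e : (ss + 1)^2 = ss^2 + 2*ss + 1 := by ring
    rw [e, hss2] at h
    linarith
  have hq3 : ((c:ℝ)+1)^2 ≤ s + 4*ss + 4 := by
    have h := pow_le_pow_left₀ (by linarith : (0:ℝ) ≤ (c:ℝ)+1)
      (by linarith : (c:ℝ)+1 ≤ ss + 2) 2
    have e : (ss + 2)^2 = ss^2 + 4*ss + 4 := by ring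
    rw [e, hss2] at h
    linarith
  have hq0 : s ≤ ((c:ℝ)+1)^2 := by
    have e : ((c:ℝ)+1)^2 = (c:ℝ)^2 + 2*(c:ℝ) + 1 := by ring
    linarith
  refine ⟨((a:ℤ), (b:ℤ), (c:ℤ)), ((a:ℤ), (b:ℤ), (c:ℤ)+1), ?_, ?_, ?_, ?_, ?_⟩
  · push_cast
    rw [show ((a:ℝ) - a)^2 + ((b:ℝ) - b)^2 + ((c:ℝ) - (c+1))^2 = 1 by ring]
    exact Real.sqrt_one
  · push_cast
    linarith
  · push_cast
    linarith
  · push_cast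
    linarith
  · push_cast
    linarith
end

section
/- Let D ⊂ ℤ be a finite nonempty set of nonzero integers, each congruent to 0 or 1 modulo 4, with the property that for every subset A ⊆ D of odd cardinality, the product ∏_{d∈A} d is not a perfect square. Then there exists a positive odd integer r such that for every d ∈ D, gcd(d, r) = 1 and the Jacobi symbol (d/r) equals −1. -/
/-!
For odd `b`, the sign vectors `(J(d | b))_{d ∈ D}` form a subgroup `H` of `{±1}^D`. Reading
`{±1}^D` as an `𝔽₂`-vector space, if `-1 ∉ H` then some linear functional vanishes on `H` but not
at `-1`; such a functional is `v ↦ ∏_{d ∈ A} v d` for a set `A ⊆ D` of odd size. This contradicts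
the fact that the non-square `m = ∏_{d ∈ A} d` has `J(m | b) = -1` for some odd `b` coprime to all
of `D`: write `m = s² a` with `a` squarefree, find `b` for `a` by quadratic reciprocity and the
Chinese remainder theorem, and replace it by a large prime in its class modulo `4|a|` (Dirichlet).
-/

open Finset

section SignVectors

variable {ι : Type*}

theorem one_mem_of_forall_odd_card [Fintype ι] (W : Submodule (ZMod 2) (ι → ZMod 2))
    (h : ∀ A : Finset ι, Odd #A → ∃ w ∈ W, ∑ i ∈ A, w i = 1) : 1 ∈ W := by
  classical
  by_contra h1
  obtain ⟨f, hf1, hfW⟩ := W.exists_dual_map_eq_bot_of_notMem h1 inferInstance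
  set A : Finset ι := {i | f (fun j => if i = j then 1 else 0) = 1}
  have hf : ∀ x, f x = ∑ i ∈ A, x i := by
    intro x
    rw [LinearMap.pi_apply_eq_sum_univ, sum_filter]
    refine sum_congr rfl fun i _ => ?_
    generalize f (fun j => if i = j then 1 else 0) = c
    obtain rfl | rfl : c = 0 ∨ c = 1 := by revert c; decide
    all_goals simp
  have hA : Odd #A := by
    rw [← Nat.not_even_iff_odd, ← ZMod.natCast_eq_zero_iff_even]
    simpa [hf] using hf1
  obtain ⟨w, hwW, hw⟩ := h A hA
  have hfw : f w ∈ W.map f := Submodule.mem_map_of_mem hwW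
  rw [hfW, Submodule.mem_bot, hf, hw] at hfw
  exact one_ne_zero hfw

theorem uzpow_sum (u : ℤˣ) (s : Finset ι) (w : ι → ZMod 2) :
    u ^ (∑ i ∈ s, w i) = ∏ i ∈ s, u ^ w i := by
  induction s using Finset.cons_induction with
  | empty => simp
  | cons a s ha ih => rw [sum_cons, prod_cons, uzpow_add, ih]

def Subgroup.toZModTwoSubmodule (H : Subgroup (ι → ℤˣ)) : Submodule (ZMod 2) (ι → ZMod 2) where
  carrier := {w | (fun i => (-1 : ℤˣ) ^ w i) ∈ H}
  add_mem' := fun {x y} (hx : _ ∈ H) (hy : _ ∈ H) => show _ ∈ H by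
    simpa only [Pi.add_apply, uzpow_add, Pi.mul_def] using H.mul_mem hx hy
  zero_mem' := show _ ∈ H by simpa only [Pi.zero_apply, uzpow_zero, Pi.one_def] using H.one_mem
  smul_mem' := fun c w (hw : _ ∈ H) => show _ ∈ H by
    obtain rfl | rfl : c = 0 ∨ c = 1 := by revert c; decide
    · simpa only [zero_smul, Pi.zero_apply, uzpow_zero, Pi.one_def] using H.one_mem
    · simpa only [one_smul] using hw

theorem neg_one_mem_of_forall_odd_card [Fintype ι] (H : Subgroup (ι → ℤˣ))
    (h : ∀ A : Finset ι, Odd #A → ∃ v ∈ H, ∏ i ∈ A, v i = -1) : -1 ∈ H := by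
  have hsurj : ∀ u : ℤˣ, ∃ z : ZMod 2, (-1 : ℤˣ) ^ z = u := fun u => by
    obtain rfl | rfl := Int.units_eq_one_or u
    exacts [⟨0, uzpow_zero _⟩, ⟨1, uzpow_one _⟩]
  have h1 : (fun i => (-1 : ℤˣ) ^ (1 : ι → ZMod 2) i) ∈ H := by
    refine one_mem_of_forall_odd_card H.toZModTwoSubmodule fun A hA => ?_
    obtain ⟨v, hvH, hv⟩ := h A hA
    choose w hw using fun i => hsurj (v i)
    refine ⟨w, show _ ∈ H by simpa only [hw] using hvH, ?_⟩
    have hpow : (-1 : ℤˣ) ^ (∑ i ∈ A, w i) = (-1) ^ (1 : ZMod 2) := by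
      rw [uzpow_sum, prod_congr rfl fun i _ => hw i, hv, uzpow_one]
    generalize ∑ i ∈ A, w i = z at hpow
    revert z; decide
  simpa only [Pi.one_apply, uzpow_one, Pi.neg_def, Pi.one_def] using h1

end SignVectors

theorem jacobiSym.prod_left {ι : Type*} (s : Finset ι) (f : ι → ℤ) (b : ℕ) :
    jacobiSym (∏ i ∈ s, f i) b = ∏ i ∈ s, jacobiSym (f i) b :=
  map_prod (⟨⟨(jacobiSym · b), jacobiSym.one_left b⟩, (jacobiSym.mul_left · · b)⟩ : ℤ →* ℤ) f s

theorem jacobiSym.gcd_eq_one_of_eq_neg_one {a : ℤ} {b : ℕ} (h : jacobiSym a b = -1) :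
    a.gcd b = 1 := by
  by_contra hab
  have hb : b ≠ 0 := by rintro rfl; simp at h
  rw [jacobiSym.eq_zero_iff.mpr ⟨hb, hab⟩] at h
  exact absurd h (by decide)

theorem exists_odd_jacobiSym_mul_eq_neg_one {p : ℕ} (hp : p.Prime) (hp2 : p ≠ 2) {v : ℤ}
    (hv : ¬ (p : ℤ) ∣ v) : ∃ b : ℕ, Odd b ∧ jacobiSym (p * v) b = -1 := by
  have := Fact.mk hp
  obtain ⟨x, hx⟩ := FiniteField.exists_nonsquare (F := ZMod p) (by rwa [ZMod.ringChar_zmod_n])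
  have hv0 : v ≠ 0 := by rintro rfl; exact hv (dvd_zero _)
  have hcop : p.Coprime (4 * v.natAbs) := by
    refine Nat.Coprime.mul_right ?_ ?_
    · exact (Nat.coprime_primes hp Nat.prime_two |>.mpr hp2).pow_right 2
    · exact (Nat.Prime.coprime_iff_not_dvd hp).mpr (by rwa [← Int.natCast_dvd])
  -- `J(p | b) = J(b | p) = -1` by reciprocity, and `J(v | b) = J(v | 1) = 1` by periodicity.
  obtain ⟨b, hbp, hbv⟩ := Nat.chineseRemainder hcop x.val 1
  have hb4 : b % 4 = 1 := (hbv.of_mul_right _ : b ≡ 1 [MOD 4])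
  refine ⟨b, Nat.odd_iff.mpr (by omega), ?_⟩
  have hJv : jacobiSym v b = 1 := by
    rw [jacobiSym.mod_right v (Nat.odd_iff.mpr (by omega)), hbv,
      Nat.mod_eq_of_lt (by omega : 1 < 4 * v.natAbs), jacobiSym.one_right]
  have hJp : jacobiSym p b = -1 := by
    rw [jacobiSym.quadratic_reciprocity_one_mod_four' (hp.odd_of_ne_two hp2) hb4,
      ← jacobiSym.legendreSym.to_jacobiSym, legendreSym.eq_neg_one_iff, Int.cast_natCast,
      (ZMod.natCast_eq_natCast_iff' b x.val p).mpr hbp, ZMod.natCast_zmod_val]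
    exact hx
  rw [jacobiSym.mul_left, hJp, hJv, mul_one]

theorem Squarefree.exists_odd_jacobiSym_eq_neg_one {a : ℤ} (ha : Squarefree a) (ha1 : a ≠ 1) :
    ∃ b : ℕ, Odd b ∧ jacobiSym a b = -1 := by
  by_cases hodd : ∃ p : ℕ, p.Prime ∧ p ≠ 2 ∧ (p : ℤ) ∣ a
  · obtain ⟨p, hp, hp2, v, rfl⟩ := hodd
    refine exists_odd_jacobiSym_mul_eq_neg_one hp hp2 fun ⟨w, hw⟩ => ?_
    exact hp.not_isUnit (Int.ofNat_isUnit.mp (ha p ⟨w, by rw [hw, mul_assoc]⟩))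
  push Not at hodd
  obtain ⟨k, hk⟩ : ∃ k, a.natAbs = 2 ^ k :=
    ⟨_, Nat.eq_prime_pow_of_unique_prime_dvd (Int.natAbs_ne_zero.mpr ha.ne_zero)
      fun hp hd => by_contra fun h => hodd _ hp h (Int.natCast_dvd.mpr hd)⟩
  have hk1 : k ≤ 1 := by
    by_contra hk1
    have := Int.squarefree_natAbs.mpr ha
    rw [hk, Nat.squarefree_pow_iff (by norm_num) (by omega)] at this
    omega
  obtain rfl | rfl | rfl : a = -1 ∨ a = 2 ∨ a = -2 := by
    interval_cases k <;> omega
  exacts [⟨3, by decide, by norm_num⟩, ⟨3, by decide, by norm_num⟩, ⟨5, by decide, by norm_num⟩]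

theorem Int.exists_sq_mul_squarefree (m : ℤ) :
    ∃ (s : ℕ) (a : ℤ), m = s ^ 2 * a ∧ Squarefree a := by
  rcases eq_or_ne m 0 with rfl | hm
  · exact ⟨0, 1, by simp, squarefree_one⟩
  obtain ⟨t, s, hst, ht⟩ := Nat.sq_mul_squarefree m.natAbs
  refine ⟨s, m.sign * t, ?_, Int.squarefree_natAbs.mp ?_⟩
  · conv_lhs => rw [← Int.sign_mul_natAbs m, ← hst]
    push_cast
    ring
  · rwa [Int.natAbs_mul, Int.natAbs_sign_of_ne_zero hm, one_mul, Int.natAbs_natCast]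

theorem exists_prime_gt_jacobiSym_eq {a : ℤ} (ha : a ≠ 0) {b : ℕ} (hb : Odd b)
    (hab : a.gcd b = 1) (N : ℕ) : ∃ p > N, p.Prime ∧ Odd p ∧ jacobiSym a p = jacobiSym a b := by
  have hq : 4 * a.natAbs ≠ 0 := by omega
  have hbq : b.Coprime (4 * a.natAbs) :=
    (Nat.coprime_two_right.mpr hb).pow_right 2 |>.mul_right (Nat.Coprime.symm hab)
  obtain ⟨p, hpN, hp, hpb⟩ := Nat.forall_exists_prime_gt_and_modEq N hq hbq
  have hp_odd : Odd p := by
    have : p ≡ b [MOD 2] := Nat.ModEq.of_dvd (Dvd.dvd.mul_right (by norm_num) _) hpb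
    rwa [Nat.odd_iff, this, ← Nat.odd_iff]
  exact ⟨p, hpN, hp, hp_odd, by rw [jacobiSym.mod_right a hp_odd, jacobiSym.mod_right a hb, hpb]⟩

theorem exists_odd_coprime_jacobiSym_eq_neg_one {m : ℤ} (hm : ¬ IsSquare m) {N : ℕ} (hN : N ≠ 0) :
    ∃ b : ℕ, Odd b ∧ b.Coprime N ∧ jacobiSym m b = -1 := by
  obtain ⟨s, a, rfl, ha⟩ := Int.exists_sq_mul_squarefree m
  have hs : s ≠ 0 := by rintro rfl; exact hm ⟨0, by simp⟩
  have ha1 : a ≠ 1 := by rintro rfl; exact hm ⟨s, by ring⟩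
  obtain ⟨b, hb, hJb⟩ := ha.exists_odd_jacobiSym_eq_neg_one ha1
  obtain ⟨p, hpN, hp, hp_odd, hJp⟩ := exists_prime_gt_jacobiSym_eq ha.ne_zero hb
    (jacobiSym.gcd_eq_one_of_eq_neg_one hJb) (N * s)
  have hpNs : p.Coprime (N * s) :=
    hp.coprime_iff_not_dvd.mpr fun h => (Nat.le_of_dvd (by positivity) h).not_gt hpN
  refine ⟨p, hp_odd, hpNs.coprime_mul_right_right, ?_⟩
  rw [jacobiSym.mul_left, jacobiSym.sq_one' ?_, hJp, hJb, one_mul]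
  simpa [Int.gcd_natCast_natCast] using hpNs.coprime_mul_left_right.symm

def jacobiSignPatterns {ι : Type*} (a : ι → ℤ) : Subgroup (ι → ℤˣ) where
  carrier := {v | ∃ b : ℕ, Odd b ∧ ∀ i, jacobiSym (a i) b = v i}
  mul_mem' := by
    rintro v w ⟨b, hb, hv⟩ ⟨c, hc, hw⟩
    refine ⟨b * c, hb.mul hc, fun i => ?_⟩
    rw [jacobiSym.mul_right' _ hb.pos.ne' hc.pos.ne', hv, hw]
    rfl
  one_mem' := ⟨1, odd_one, fun i => jacobiSym.one_right _⟩
  inv_mem' := by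
    rintro v ⟨b, hb, hv⟩
    exact ⟨b, hb, fun i => by rw [hv, Pi.inv_apply, Int.units_inv_eq_self]⟩

theorem exists_mem_jacobiSignPatterns {ι : Type*} {a : ι → ℤ} {b : ℕ} (hb : Odd b)
    (hab : ∀ i, (a i).gcd b = 1) :
    ∃ v ∈ jacobiSignPatterns a, ∀ i, (v i : ℤ) = jacobiSym (a i) b := by
  have hu i : IsUnit (jacobiSym (a i) b) :=
    Int.isUnit_iff.mpr (jacobiSym.eq_one_or_neg_one (hab i))
  exact ⟨fun i => (hu i).unit, ⟨b, hb, fun i => rfl⟩, fun i => rfl⟩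

theorem exists_jacobi_neg_one_general (D : Finset ℤ)
    (hsq : ∀ A ⊆ D, Odd A.card → ¬ IsSquare (∏ d ∈ A, d)) :
    ∃ r : ℕ, 0 < r ∧ Odd r ∧ ∀ d ∈ D, Int.gcd d (r : ℤ) = 1 ∧ jacobiSym d r = -1 := by
  have hD0 : ∀ d ∈ D, d ≠ 0 := fun d hd h0 =>
    hsq {d} (singleton_subset_iff.mpr hd) (by simp) ⟨0, by simp [h0]⟩
  have hN : ∏ d ∈ D, d.natAbs ≠ 0 :=
    prod_ne_zero_iff.mpr fun d hd => Int.natAbs_ne_zero.mpr (hD0 d hd)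
  obtain ⟨r, hr, hJ⟩ : -1 ∈ jacobiSignPatterns ((↑) : D → ℤ) := by
    refine neg_one_mem_of_forall_odd_card _ fun A hA => ?_
    have hA : ¬ IsSquare (∏ d ∈ A, (d : ℤ)) := by
      have hAD : A.map (Function.Embedding.subtype _) ⊆ D := fun _ hd => by
        obtain ⟨⟨d, hdD⟩, -, rfl⟩ := mem_map.mp hd
        exact hdD
      simpa [prod_map] using hsq _ hAD (by simpa)
    obtain ⟨b, hb, hbN, hJb⟩ := exists_odd_coprime_jacobiSym_eq_neg_one hA hN
    obtain ⟨v, hvH, hv⟩ := exists_mem_jacobiSignPatterns hb fun d : D =>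
      (hbN.coprime_dvd_right (dvd_prod_of_mem _ d.2)).symm
    refine ⟨v, hvH, Units.ext ?_⟩
    push_cast
    rw [prod_congr rfl fun d _ => hv d, ← jacobiSym.prod_left, hJb]
  refine ⟨r, hr.pos, hr, fun d hd => ?_⟩
  have hJd : jacobiSym d r = -1 := by simpa using hJ ⟨d, hd⟩
  exact ⟨jacobiSym.gcd_eq_one_of_eq_neg_one hJd, hJd⟩

/-- Mallet-Paret–Sell lemma: if `D` is a finite nonempty set of nonzero integers
`≡ 0, 1 (mod 4)` such that no odd-cardinality subset has square product, then there
is a positive odd integer `r` coprime to each `d ∈ D` with Jacobi symbol `(d/r) = -1`. -/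
theorem exists_jacobi_neg_one (D : Finset ℤ) (hne : D.Nonempty)
    (hD : ∀ d ∈ D, d ≠ 0 ∧ (d % 4 = 0 ∨ d % 4 = 1))
    (hsq : ∀ A ⊆ D, Odd A.card → ¬ IsSquare (∏ d ∈ A, d)) :
    ∃ r : ℕ, 0 < r ∧ Odd r ∧ ∀ d ∈ D, Int.gcd d (r : ℤ) = 1 ∧ jacobiSym d r = -1 :=
  exists_jacobi_neg_one_general D hsq
end

section
/- Let a, b, c ∈ ℤ and set d = b² − 4ac. Let p be an odd prime such that p ∤ d and the Legendre symbol (d/p) = −1. Then for all k₁, k₂ ∈ ℤ, the value T(k₁,k₂) = a·k₁² + b·k₁·k₂ + c·k₂² is divisible by p an even number of times; that is, either T(k₁,k₂) = 0, or T(k₁,k₂) = p^α·m with α even (possibly zero) and p ∤ m. -/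
private lemma key_dvd (a b c : ℤ) (p : ℕ) [Fact p.Prime]
    (hpd : ¬ (p : ℤ) ∣ (b^2 - 4*a*c)) (hleg : legendreSym p (b^2 - 4*a*c) = -1)
    (k₁ k₂ : ℤ) (hp : (p : ℤ) ∣ a * k₁^2 + b * k₁ * k₂ + c * k₂^2) :
    (p : ℤ) ∣ k₁ ∧ (p : ℤ) ∣ k₂ := by
  have hns : ¬ IsSquare (((b^2 - 4*a*c : ℤ) : ZMod p)) :=
    (legendreSym.eq_neg_one_iff p).mp hleg
  set A : ZMod p := (a : ZMod p)
  set B : ZMod p := (b : ZMod p)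
  set C : ZMod p := (c : ZMod p)
  set K1 : ZMod p := (k₁ : ZMod p)
  set K2 : ZMod p := (k₂ : ZMod p)
  have hD : ((b^2 - 4*a*c : ℤ) : ZMod p) = B^2 - 4*A*C := by push_cast; ring
  have hT : A * K1^2 + B * K1 * K2 + C * K2^2 = 0 := by
    have := (ZMod.intCast_zmod_eq_zero_iff_dvd _ p).mpr hp
    push_cast at this
    linear_combination this
  have hK2 : K2 = 0 := by
    by_contra h
    apply hns
    refine ⟨(2*A*K1 + B*K2) * K2⁻¹, ?_⟩
    rw [hD]
    field_simp
    linear_combination (-4*A) * hT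
  have hA : A ≠ 0 := by
    intro hA0
    apply hns
    rw [hD, hA0]
    exact ⟨B, by ring⟩
  have hK1 : K1 = 0 := by
    rw [hK2] at hT
    have : A * K1^2 = 0 := by linear_combination hT
    rcases mul_eq_zero.mp this with h | h
    · exact absurd h hA
    · exact pow_eq_zero_iff (two_ne_zero) |>.mp h
  exact ⟨(ZMod.intCast_zmod_eq_zero_iff_dvd _ p).mp hK1,
    (ZMod.intCast_zmod_eq_zero_iff_dvd _ p).mp hK2⟩

private lemma key_aux (a b c : ℤ) (p : ℕ) [Fact p.Prime]
    (hpd : ¬ (p : ℤ) ∣ (b^2 - 4*a*c)) (hleg : legendreSym p (b^2 - 4*a*c) = -1) :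
    ∀ n : ℕ, ∀ k₁ k₂ : ℤ, (a * k₁^2 + b * k₁ * k₂ + c * k₂^2).natAbs = n →
    a * k₁^2 + b * k₁ * k₂ + c * k₂^2 = 0 ∨
      ∃ (α : ℕ) (m : ℤ), Even α ∧ ¬ (p : ℤ) ∣ m ∧
        a * k₁^2 + b * k₁ * k₂ + c * k₂^2 = (p : ℤ)^α * m := by
  intro n
  induction n using Nat.strong_induction_on with
  | _ n ih =>
    intro k₁ k₂ hn
    by_cases hT : a * k₁^2 + b * k₁ * k₂ + c * k₂^2 = 0
    · exact Or.inl hT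
    right
    by_cases hp : (p : ℤ) ∣ a * k₁^2 + b * k₁ * k₂ + c * k₂^2
    · obtain ⟨hk1, hk2⟩ := key_dvd a b c p hpd hleg k₁ k₂ hp
      obtain ⟨k₁', rfl⟩ := hk1
      obtain ⟨k₂', rfl⟩ := hk2
      have hfac : a * ((p:ℤ)*k₁')^2 + b * ((p:ℤ)*k₁') * ((p:ℤ)*k₂') + c * ((p:ℤ)*k₂')^2
          = (p:ℤ)^2 * (a * k₁'^2 + b * k₁' * k₂' + c * k₂'^2) := by ring
      have hp1 : 1 < p := (Fact.out : p.Prime).one_lt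
      have hT' : a * k₁'^2 + b * k₁' * k₂' + c * k₂'^2 ≠ 0 := by
        intro h0; apply hT; rw [hfac, h0, mul_zero]
      have hlt : (a * k₁'^2 + b * k₁' * k₂' + c * k₂'^2).natAbs < n := by
        rw [← hn, hfac, Int.natAbs_mul, Int.natAbs_pow, Int.natAbs_natCast]
        have h1 : 1 ≤ (a * k₁'^2 + b * k₁' * k₂' + c * k₂'^2).natAbs :=
          Nat.one_le_iff_ne_zero.mpr (Int.natAbs_ne_zero.mpr hT')
        calc (a * k₁'^2 + b * k₁' * k₂' + c * k₂'^2).natAbs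
            = 1 * (a * k₁'^2 + b * k₁' * k₂' + c * k₂'^2).natAbs := (one_mul _).symm
          _ < p^2 * (a * k₁'^2 + b * k₁' * k₂' + c * k₂'^2).natAbs := by
              exact (Nat.mul_lt_mul_right (Nat.lt_of_lt_of_le Nat.zero_lt_one h1)).mpr
                (Nat.one_lt_pow two_ne_zero hp1)
      rcases ih _ hlt k₁' k₂' rfl with h0 | ⟨α, m, hα, hm, hEq⟩
      · exact absurd h0 hT'
      · exact ⟨α + 2, m, by simpa using hα.add (even_two : Even 2),
          hm, by rw [hfac, hEq]; ring⟩
    · exact ⟨0, _, Even.zero, hp, by rw [pow_zero, one_mul]⟩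

/-- Mallet-Paret–Sell lemma: if `p` is an odd prime with `p ∤ d` and Legendre symbol
`(d/p) = -1`, where `d = b² - 4ac`, then the quadratic form `a k₁² + b k₁k₂ + c k₂²`
is divisible by `p` an even number of times. -/
theorem quadratic_form_even_padic (a b c : ℤ) (p : ℕ) [Fact p.Prime] (hodd : Odd p)
    (hpd : ¬ (p : ℤ) ∣ (b^2 - 4*a*c)) (hleg : legendreSym p (b^2 - 4*a*c) = -1)
    (k₁ k₂ : ℤ) :
    a * k₁^2 + b * k₁ * k₂ + c * k₂^2 = 0 ∨
      ∃ (α : ℕ) (m : ℤ), Even α ∧ ¬ (p : ℤ) ∣ m ∧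
        a * k₁^2 + b * k₁ * k₂ + c * k₂^2 = (p : ℤ)^α * m :=
  key_aux a b c p hpd hleg _ k₁ k₂ rfl
end

section
/- Let a, b, c ∈ ℤ with b² − 4ac ≡ 5 (mod 8). Then for all k₁, k₂ ∈ ℤ, the value T(k₁,k₂) = a·k₁² + b·k₁·k₂ + c·k₂² is divisible by 2 an even number of times; that is, either T(k₁,k₂) = 0, or T(k₁,k₂) = 2^α·m with α even (possibly zero) and m odd. -/
private lemma zmod2_aux : ∀ x y : ZMod 2, (x ≠ 0 ∨ y ≠ 0) → x^2 + x*y + y^2 = 1 := by decide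

private lemma odd_cast_zmod2 {a : ℤ} (ha : Odd a) : (a : ZMod 2) = 1 := by
  obtain ⟨t, rfl⟩ := ha
  push_cast
  rw [show ((2 : ZMod 2)) = 0 by decide]
  ring

private lemma odd_T (a b c k₁ k₂ : ℤ) (ha : Odd a) (hb : Odd b) (hc : Odd c)
    (hk : ¬ ((2:ℤ) ∣ k₁) ∨ ¬ ((2:ℤ) ∣ k₂)) :
    Odd (a * k₁^2 + b * k₁ * k₂ + c * k₂^2) := by
  rw [← Int.not_even_iff_odd, even_iff_two_dvd]
  intro hdvd
  have key : ((a * k₁^2 + b * k₁ * k₂ + c * k₂^2 : ℤ) : ZMod 2) = 1 := by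
    push_cast
    rw [odd_cast_zmod2 ha, odd_cast_zmod2 hb, odd_cast_zmod2 hc]
    simp only [one_mul]
    apply zmod2_aux
    rcases hk with hk | hk
    · left
      intro hz
      exact hk ((ZMod.intCast_zmod_eq_zero_iff_dvd k₁ 2).mp hz)
    · right
      intro hz
      exact hk ((ZMod.intCast_zmod_eq_zero_iff_dvd k₂ 2).mp hz)
  have : ((a * k₁^2 + b * k₁ * k₂ + c * k₂^2 : ℤ) : ZMod 2) = 0 :=
    (ZMod.intCast_zmod_eq_zero_iff_dvd _ 2).mpr (by exact_mod_cast hdvd)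
  rw [key] at this
  exact one_ne_zero this

/-- If `b² - 4ac ≡ 5 (mod 8)`, then the quadratic form `a k₁² + b k₁k₂ + c k₂²`
is divisible by `2` an even number of times. -/
theorem quadratic_form_even_two_adic (a b c : ℤ) (h : (b^2 - 4*a*c) % 8 = 5)
    (k₁ k₂ : ℤ) :
    a * k₁^2 + b * k₁ * k₂ + c * k₂^2 = 0 ∨
      ∃ (α : ℕ) (m : ℤ), Even α ∧ Odd m ∧
        a * k₁^2 + b * k₁ * k₂ + c * k₂^2 = 2^α * m := by
  -- b is odd
  have hb : Odd b := by
    rcases Int.even_or_odd b with ⟨t, rfl⟩ | hb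
    · exfalso
      have e : (t + t)^2 - 4*a*c = 4*(t^2 - a*c) := by ring
      rw [e] at h
      generalize t^2 - a*c = s at h
      omega
    · exact hb
  -- a*c is odd
  have hac : Odd (a * c) := by
    obtain ⟨t, rfl⟩ := hb
    obtain ⟨u, hu⟩ : Even (t * (t + 1)) := Int.even_mul_succ_self t
    have e : (2*t + 1)^2 - 4*a*c = 8*u + 1 - 4*(a*c) := by
      have : (2*t+1)^2 = 4*(t*(t+1)) + 1 := by ring
      rw [this, hu]; ring
    rw [e] at h
    rw [Int.odd_iff]
    generalize a*c = s at h ⊢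
    omega
  have ha : Odd a := (Int.odd_mul.mp hac).1
  have hc : Odd c := (Int.odd_mul.mp hac).2
  -- strong induction on |k₁| + |k₂|
  suffices H : ∀ n : ℕ, ∀ k₁ k₂ : ℤ, k₁.natAbs + k₂.natAbs ≤ n →
      (a * k₁^2 + b * k₁ * k₂ + c * k₂^2 = 0 ∨
        ∃ (α : ℕ) (m : ℤ), Even α ∧ Odd m ∧
          a * k₁^2 + b * k₁ * k₂ + c * k₂^2 = 2^α * m) by
    exact H _ k₁ k₂ le_rfl
  intro n
  induction n with
  | zero =>
    intro k₁ k₂ hn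
    have h1 : k₁ = 0 := by omega
    have h2 : k₂ = 0 := by omega
    left
    subst h1; subst h2; ring
  | succ n ih =>
    intro k₁ k₂ hn
    by_cases h1 : (2:ℤ) ∣ k₁
    · by_cases h2 : (2:ℤ) ∣ k₂
      · obtain ⟨j₁, rfl⟩ := h1
        obtain ⟨j₂, rfl⟩ := h2
        by_cases hz : j₁ = 0 ∧ j₂ = 0
        · left
          rw [hz.1, hz.2]; ring
        · have hlt : j₁.natAbs + j₂.natAbs ≤ n := by
            have e1 : (2 * j₁).natAbs = 2 * j₁.natAbs := by
              rw [Int.natAbs_mul]; rfl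
            have e2 : (2 * j₂).natAbs = 2 * j₂.natAbs := by
              rw [Int.natAbs_mul]; rfl
            rw [e1, e2] at hn
            rcases (not_and_or.mp hz) with hj | hj
            · have : j₁.natAbs ≠ 0 := fun hh => hj (Int.natAbs_eq_zero.mp hh)
              omega
            · have : j₂.natAbs ≠ 0 := fun hh => hj (Int.natAbs_eq_zero.mp hh)
              omega
          have e4 : a * (2*j₁)^2 + b * (2*j₁) * (2*j₂) + c * (2*j₂)^2 =
              4 * (a * j₁^2 + b * j₁ * j₂ + c * j₂^2) := by ring
          rcases ih j₁ j₂ hlt with heq | ⟨α, m, hα, hm, heq⟩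
          · left
            rw [e4, heq]; ring
          · right
            refine ⟨α + 2, m, ?_, hm, ?_⟩
            · obtain ⟨p, hp⟩ := hα
              exact ⟨p + 1, by omega⟩
            · rw [e4, heq, pow_succ, pow_succ]; ring
      · right
        exact ⟨0, _, Even.zero, odd_T a b c k₁ k₂ ha hb hc (Or.inr h2), by ring⟩
    · right
      exact ⟨0, _, Even.zero, odd_T a b c k₁ k₂ ha hb hc (Or.inl h1), by ring⟩
end

section
/- Let α > 4√2. Then for all sufficiently large real λ > 0, setting m = ⌊λ^{1/2}⌋, one has √(λ + α·λ^{1/4} − m²) − √(λ − m²) > 2. -/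
/-- For `α > 4√2` and all sufficiently large `λ > 0`, with `m = ⌊λ^{1/2}⌋` one has
`√(λ + α λ^{1/4} - m²) - √(λ - m²) > 2`. -/
theorem sqrt_gap_two (α : ℝ) (hα : α > 4 * Real.sqrt 2) :
    ∃ Λ : ℝ, 0 < Λ ∧ ∀ lam : ℝ, Λ ≤ lam →
      Real.sqrt (lam + α * lam ^ ((1 : ℝ)/4) - ((⌊lam ^ ((1 : ℝ)/2)⌋ : ℤ) : ℝ)^2)
        - Real.sqrt (lam - ((⌊lam ^ ((1 : ℝ)/2)⌋ : ℤ) : ℝ)^2) > 2 := by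
  have h2 : (0:ℝ) < Real.sqrt 2 := Real.sqrt_pos.2 (by norm_num)
  set δ : ℝ := α - 4 * Real.sqrt 2 with hδdef
  have hδ : 0 < δ := by simp [hδdef]; linarith
  set C : ℝ := 8 / δ + 1 with hCdef
  have hC0 : 0 < C := by positivity
  refine ⟨max 1 (C ^ 4), by positivity, fun lam hlam => ?_⟩
  have h1 : (1:ℝ) ≤ lam := le_trans (le_max_left _ _) hlam
  have hlam0 : (0:ℝ) < lam := by linarith
  set s : ℝ := lam ^ ((1:ℝ)/2) with hsdef
  set t : ℝ := lam ^ ((1:ℝ)/4) with htdef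
  have hs_sqrt : s = Real.sqrt lam := by
    rw [hsdef, Real.sqrt_eq_rpow]
  have hs1 : (1:ℝ) ≤ s := by
    rw [hsdef]
    exact Real.one_le_rpow h1 (by norm_num)
  have hs_sq : s ^ 2 = lam := by
    rw [hs_sqrt, Real.sq_sqrt hlam0.le]
  have ht0 : 0 < t := Real.rpow_pos_of_pos hlam0 _
  have htC : C ≤ t := by
    have h4 : (C ^ 4 : ℝ) ^ ((1:ℝ)/4) ≤ t := by
      rw [htdef]
      exact Real.rpow_le_rpow (by positivity) (le_trans (le_max_right _ _) hlam) (by norm_num)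
    rwa [← Real.rpow_natCast C 4, ← Real.rpow_mul hC0.le, show (4:ℕ) * ((1:ℝ)/4) = 1 by norm_num,
      Real.rpow_one] at h4
  have ht_sq : Real.sqrt s = t := by
    rw [Real.sqrt_eq_rpow, hsdef, ← Real.rpow_mul hlam0.le, htdef]
    norm_num
  set m : ℝ := ((⌊lam ^ ((1 : ℝ)/2)⌋ : ℤ) : ℝ) with hmdef
  have hm_le : m ≤ s := Int.floor_le _
  have hm_lt : s < m + 1 := Int.lt_floor_add_one _
  have hm0 : 0 ≤ m := by
    rw [hmdef]
    exact_mod_cast Int.floor_nonneg.2 (by rw [← hsdef]; linarith)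
  clear_value s t m
  set a : ℝ := lam - m ^ 2 with hadef
  have ha0 : 0 ≤ a := by
    rw [hadef, ← hs_sq]
    nlinarith
  have ha_lt : a < 2 * s + 1 := by
    rw [hadef, ← hs_sq]
    nlinarith
  -- bound on √a
  have hsa : Real.sqrt a ≤ Real.sqrt 2 * t + 1 := by
    have h1' : Real.sqrt a ≤ Real.sqrt (2 * s + 1) := Real.sqrt_le_sqrt ha_lt.le
    have h2' : Real.sqrt (2 * s + 1) ≤ Real.sqrt (2 * s) + 1 := by
      have hnn : 0 ≤ Real.sqrt (2 * s) := Real.sqrt_nonneg _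
      have hsq : (2 * s + 1) ≤ (Real.sqrt (2 * s) + 1) ^ 2 := by
        have := Real.sq_sqrt (by linarith : (0:ℝ) ≤ 2 * s)
        nlinarith
      calc Real.sqrt (2 * s + 1) ≤ Real.sqrt ((Real.sqrt (2 * s) + 1) ^ 2) :=
            Real.sqrt_le_sqrt hsq
        _ = Real.sqrt (2 * s) + 1 := Real.sqrt_sq (by linarith)
    have h3' : Real.sqrt (2 * s) = Real.sqrt 2 * t := by
      rw [Real.sqrt_mul (by norm_num : (0:ℝ) ≤ 2), ht_sq]
    linarith
  -- key: 4 + 4√a < α t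
  have hkey : 4 + 4 * Real.sqrt a < α * t := by
    have hαt : α * t = 4 * Real.sqrt 2 * t + δ * t := by rw [hδdef]; ring
    have hδt : 8 + δ ≤ δ * t := by
      have := mul_le_mul_of_nonneg_left htC hδ.le
      rw [hCdef] at this
      calc 8 + δ = δ * (8 / δ + 1) := by field_simp
        _ ≤ δ * t := this
    nlinarith [Real.sqrt_nonneg a]
  -- conclude
  have hb : lam + α * t - m ^ 2 = a + α * t := by rw [hadef]; ring
  have hgoal : 2 + Real.sqrt a < Real.sqrt (a + α * t) := by
    rw [show (2:ℝ) + Real.sqrt a = Real.sqrt ((2 + Real.sqrt a)^2) from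
      (Real.sqrt_sq (by positivity)).symm]
    apply Real.sqrt_lt_sqrt (by positivity)
    have := Real.sq_sqrt ha0
    nlinarith
  have : Real.sqrt (lam - m ^ 2) = Real.sqrt a := by rw [hadef]
  rw [hb]
  linarith
end

section
/- Fix d ≥ 1, C > 0, 0 < s < 1/4, and j ∈ ℤ² with 0 < |j| ≤ d. For μ > 0 set κ = C·μ^s and J = ⌊μ^{1/2}⌋. Then for all sufficiently large μ, the number of lattice points k ∈ ℤ² satisfying both μ < |k|² ≤ μ + (J+1)·κ and |k·j| < κ/2 + d²/2 is at most 4·C²·μ^{2s}. -/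
open Filter Real

private lemma ev_le_aux (A A' a b : ℝ) (hA' : 0 < A') (hab : a < b) :
    ∀ᶠ μ : ℝ in atTop, A * μ ^ a ≤ A' * μ ^ b := by
  have h := tendsto_rpow_atTop (show (0:ℝ) < b - a by linarith)
  filter_upwards [h.eventually_ge_atTop (A / A'), eventually_ge_atTop (1:ℝ)] with μ h1 h2
  have hμ : (0:ℝ) < μ := by linarith
  have hpa : (0:ℝ) < μ ^ a := Real.rpow_pos_of_pos hμ a
  have key : A / A' * μ ^ a ≤ μ ^ (b - a) * μ ^ a :=
    mul_le_mul_of_nonneg_right h1 hpa.le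
  rw [← Real.rpow_add hμ] at key
  have hba : b - a + a = b := by ring
  rw [hba] at key
  have : A * μ ^ a = A' * (A / A' * μ ^ a) := by field_simp
  rw [this]
  exact mul_le_mul_of_nonneg_left key hA'.le

private lemma card_Icc_le_real (a b : ℤ) (R : ℝ) (h : ((b:ℝ) + 1 - (a:ℝ)) ≤ R) (h0 : 0 ≤ R) :
    ((Finset.Icc a b).card : ℝ) ≤ R := by
  rw [Int.card_Icc]
  have h1 : ((b + 1 - a).toNat : ℤ) = (b + 1 - a) ⊔ 0 := Int.toNat_eq_max _
  have h2 : (((b + 1 - a).toNat : ℤ) : ℝ) = max ((b:ℝ) + 1 - a) 0 := by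
    rw [h1]; push_cast; rfl
  have : (((b + 1 - a).toNat : ℕ) : ℝ) = max ((b:ℝ) + 1 - a) 0 := by exact_mod_cast h2
  rw [this]
  exact max_le h h0

set_option maxHeartbeats 1000000 in
/-- Lattice point count in the intersection of the annulus `N^μ` and the strip
`S_j^μ`: for fixed `d ≥ 1`, `C > 0`, `0 < s < 1/4` and `j ∈ ℤ²` with `0 < |j| ≤ d`,
for all sufficiently large `μ` the number of lattice points `k` with
`μ < |k|² ≤ μ + (J+1)κ` and `|k·j| < κ/2 + d²/2` (where `κ = C μ^s`,
`J = ⌊μ^{1/2}⌋`) is at most `4 C² μ^{2s}`. -/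
theorem card_strip_inter_annulus (d C s : ℝ) (hd : 1 ≤ d) (hC : 0 < C)
    (hs0 : 0 < s) (hs1 : s < 1/4) (j : ℤ × ℤ)
    (hj0 : 0 < Real.sqrt ((j.1 : ℝ)^2 + (j.2 : ℝ)^2))
    (hjd : Real.sqrt ((j.1 : ℝ)^2 + (j.2 : ℝ)^2) ≤ d) :
    ∃ μ₀ : ℝ, ∀ μ : ℝ, μ₀ ≤ μ →
      (({k : ℤ × ℤ |
          μ < ((k.1 : ℝ)^2 + (k.2 : ℝ)^2) ∧
          ((k.1 : ℝ)^2 + (k.2 : ℝ)^2) ≤ μ + ((⌊μ ^ ((1 : ℝ)/2)⌋ : ℤ) + 1 : ℝ) * (C * μ ^ s) ∧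
          |(k.1 : ℝ) * (j.1 : ℝ) + (k.2 : ℝ) * (j.2 : ℝ)| < (C * μ ^ s) / 2 + d^2 / 2}).ncard : ℝ)
        ≤ 4 * C^2 * μ ^ (2 * s) := by
  -- basic facts about j
  have hn0 : (0:ℝ) < (j.1 : ℝ)^2 + (j.2 : ℝ)^2 := by
    by_contra h
    push_neg at h
    have : Real.sqrt ((j.1 : ℝ)^2 + (j.2 : ℝ)^2) = 0 := by
      have h0 : (j.1 : ℝ)^2 + (j.2 : ℝ)^2 = 0 := le_antisymm h (by positivity)
      rw [h0, Real.sqrt_zero]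
    linarith [hj0, this.symm ▸ hj0]
  set n : ℝ := (j.1 : ℝ)^2 + (j.2 : ℝ)^2 with hn_def
  have hnI : (0:ℤ) < j.1^2 + j.2^2 := by exact_mod_cast (by push_cast; exact hn0 : (0:ℝ) < ((j.1^2 + j.2^2 : ℤ) : ℝ))
  have hn1 : (1:ℝ) ≤ n := by
    rw [hn_def]
    have h' : ((1:ℤ):ℝ) ≤ ((j.1^2 + j.2^2 : ℤ):ℝ) := by exact_mod_cast hnI
    push_cast at h'
    linarith
  have hnd : n ≤ d^2 := by
    have h1 : Real.sqrt n ^ 2 ≤ d ^ 2 := by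
      apply pow_le_pow_left₀ (Real.sqrt_nonneg _) hjd
    rwa [Real.sq_sqrt hn0.le] at h1
  clear_value n
  -- the eventual hypotheses
  have H2' := ev_le_aux (C^2) (1/2) (2*s) 1 (by norm_num) (by linarith)
  have H3' := ev_le_aux (d^2+3) C 0 s (by linarith) hs0
  have H4' := ev_le_aux (16*C) 1 s (1/2) (by norm_num) (by linarith)
  have H5' := ev_le_aux 48 C 0 s (by linarith) hs0
  have Hall : ∀ᶠ μ : ℝ in atTop,
      (({k : ℤ × ℤ |
          μ < ((k.1 : ℝ)^2 + (k.2 : ℝ)^2) ∧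
          ((k.1 : ℝ)^2 + (k.2 : ℝ)^2) ≤ μ + ((⌊μ ^ ((1 : ℝ)/2)⌋ : ℤ) + 1 : ℝ) * (C * μ ^ s) ∧
          |(k.1 : ℝ) * (j.1 : ℝ) + (k.2 : ℝ) * (j.2 : ℝ)| < (C * μ ^ s) / 2 + d^2 / 2}).ncard : ℝ)
        ≤ 4 * C^2 * μ ^ (2 * s) := by
    filter_upwards [H2', H3', H4', H5', eventually_ge_atTop (256:ℝ)] with μ H2 H3 H4 H5 H1
    have hμ0 : (0:ℝ) < μ := by linarith
    have hμ1 : (1:ℝ) ≤ μ := by linarith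
    rw [Real.rpow_zero, mul_one] at H3 H5
    rw [Real.rpow_one] at H2
    rw [one_mul] at H4
    set κ : ℝ := C * μ ^ s with hκ_def
    have hκ0 : 0 < κ := by rw [hκ_def]; positivity
    have hκ48 : (48:ℝ) ≤ κ := H5
    have hκd : d^2 + 3 ≤ κ := H3
    have hκsq : κ^2 = C^2 * μ ^ (2*s) := by
      have h2 : (μ ^ s) ^ (2:ℕ) = μ ^ (2*s) := by
        rw [← Real.rpow_natCast (μ ^ s) 2, ← Real.rpow_mul hμ0.le]
        norm_num [mul_comm]
      rw [hκ_def, mul_pow]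
      rw [h2]
    clear_value κ
    set L : ℝ := ((⌊μ ^ ((1 : ℝ)/2)⌋ : ℤ) + 1 : ℝ) * κ with hL_def
    set B : ℝ := κ/2 + d^2/2 with hB_def
    set S : Set (ℤ × ℤ) := {k : ℤ × ℤ |
      μ < ((k.1 : ℝ)^2 + (k.2 : ℝ)^2) ∧
      ((k.1 : ℝ)^2 + (k.2 : ℝ)^2) ≤ μ + L ∧
      |(k.1 : ℝ) * (j.1 : ℝ) + (k.2 : ℝ) * (j.2 : ℝ)| < B} with hS_def
    clear_value S
    -- notation
    set sn : ℝ := Real.sqrt n with hsn_def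
    have hsn0 : 0 < sn := hj0
    have hsn1 : (1:ℝ) ≤ sn := by
      rw [hsn_def, show (1:ℝ) = Real.sqrt 1 by simp]
      exact Real.sqrt_le_sqrt hn1
    have hsnsq : sn^2 = n := by rw [hsn_def]; exact Real.sq_sqrt hn0.le
    clear_value sn
    have hrt : μ ^ ((1:ℝ)/2) = Real.sqrt μ := (Real.sqrt_eq_rpow μ).symm
    have hsqμ : (16:ℝ) ≤ Real.sqrt μ := by
      have : Real.sqrt 256 ≤ Real.sqrt μ := Real.sqrt_le_sqrt H1
      rwa [show (256:ℝ) = 16^2 by norm_num, Real.sqrt_sq (by norm_num : (0:ℝ) ≤ 16)] at this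
    have hsqμ0 : (0:ℝ) < Real.sqrt μ := by linarith
    have H4'' : 16*κ ≤ Real.sqrt μ := by
      have e : 16*κ = 16*C*μ^s := by rw [hκ_def]; ring
      rw [e, Real.sqrt_eq_rpow]
      exact H4
    have hfl0 : (0:ℤ) ≤ ⌊μ ^ ((1:ℝ)/2)⌋ := Int.floor_nonneg.mpr (by rw [hrt]; positivity)
    have hL0 : 0 ≤ L := by
      rw [hL_def]
      apply mul_nonneg _ hκ0.le
      have : ((0:ℤ):ℝ) ≤ ((⌊μ ^ ((1:ℝ)/2)⌋ : ℤ) : ℝ) := Int.cast_le.mpr hfl0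
      push_cast at this ⊢
      linarith
    have hL_ub : L ≤ (Real.sqrt μ + 1) * κ := by
      rw [hL_def]
      apply mul_le_mul_of_nonneg_right _ hκ0.le
      rw [hrt]
      linarith [Int.floor_le (Real.sqrt μ)]
    clear_value L
    have hB0 : 0 < B := by
      have : (0:ℝ) < d^2 := by positivity
      rw [hB_def]; linarith
    have hBκ : B ≤ κ := by rw [hB_def]; linarith
    clear_value B
    have hB2κ : B^2 ≤ κ^2 := pow_le_pow_left₀ hB0.le hBκ 2
    have hB2 : B^2 ≤ μ/2 := by linarith [hκsq, H2, hB2κ]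
    set bb : ℝ := Real.sqrt (n * (μ + L)) with hbb_def
    set a0 : ℝ := Real.sqrt (n * μ - B^2) with ha0_def
    have hμL0 : (0:ℝ) ≤ μ + L := by linarith
    have hbb2 : bb^2 = n*(μ+L) := by
      rw [hbb_def]; exact Real.sq_sqrt (mul_nonneg hn0.le hμL0)
    have hμn : μ ≤ n*μ := le_mul_of_one_le_left hμ0.le hn1
    have ha0nn : (0:ℝ) ≤ n*μ - B^2 := by linarith
    have ha02 : a0^2 = n*μ - B^2 := by rw [ha0_def]; exact Real.sq_sqrt ha0nn
    have ha00 : 0 ≤ a0 := by rw [ha0_def]; exact Real.sqrt_nonneg _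
    have hbb0 : 0 ≤ bb := by rw [hbb_def]; exact Real.sqrt_nonneg _
    have hnL : (0:ℝ) ≤ n*L := mul_nonneg hn0.le hL0
    have hba : a0 ≤ bb := by
      rw [ha0_def, hbb_def]
      apply Real.sqrt_le_sqrt
      have e : n*(μ+L) = n*μ + n*L := by ring
      linarith [sq_nonneg B]
    have hsnm : Real.sqrt (n*μ) = sn * Real.sqrt μ := by
      rw [hsn_def]; exact Real.sqrt_mul hn0.le μ
    have hbb_lb : sn * Real.sqrt μ ≤ bb := by
      rw [← hsnm, hbb_def]
      apply Real.sqrt_le_sqrt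
      have e : n*(μ+L) = n*μ + n*L := by ring
      linarith
    have ha0_lb : (7/10) * (sn * Real.sqrt μ) ≤ a0 := by
      rw [← hsnm, ha0_def]
      apply (Real.le_sqrt (mul_nonneg (by norm_num) (Real.sqrt_nonneg _)) ha0nn).mpr
      rw [mul_pow, Real.sq_sqrt (mul_nonneg hn0.le hμ0.le)]
      linarith
    clear_value bb a0
    have hdiff : (bb - a0) * ((17/10) * (sn * Real.sqrt μ)) ≤ n*L + B^2 := by
      have h1 : (17/10) * (sn * Real.sqrt μ) ≤ bb + a0 := by linarith
      have h2 : (bb - a0) * (bb + a0) = n*L + B^2 := by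
        have e : (bb - a0) * (bb + a0) = bb^2 - a0^2 := by ring
        rw [e, hbb2, ha02]; ring
      have h3 := mul_le_mul_of_nonneg_left h1 (by linarith : (0:ℝ) ≤ bb - a0)
      rw [h2] at h3
      exact h3
    -- the injection
    set Φ : ℤ × ℤ → ℤ × ℤ :=
      fun k => (k.1*j.1 + k.2*j.2, ⌊((-(k.1*j.2) + k.2*j.1 : ℤ) : ℝ)/sn⌋) with hΦ_def
    set tm : ℤ := ⌈B⌉ with htm_def
    set m1 : ℤ := ⌈a0/sn⌉ - 1 with hm1_def
    set m2 : ℤ := ⌊bb/sn⌋ with hm2_def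
    set m3 : ℤ := ⌊-bb/sn⌋ with hm3_def
    set m4 : ℤ := ⌈-a0/sn⌉ with hm4_def
    set T : Finset (ℤ × ℤ) :=
      (Finset.Icc (-tm) tm) ×ˢ ((Finset.Icc m1 m2) ∪ (Finset.Icc m3 m4)) with hT_def
    clear_value Φ tm m1 m2 m3 m4 T
    have hinj : Set.InjOn Φ S := by
      intro k hk k' hk' heq
      by_contra hne
      simp only [hΦ_def, Prod.mk.injEq] at heq
      obtain ⟨ht_eq, hm_eq⟩ := heq
      have habne : k.1 - k'.1 ≠ 0 ∨ k.2 - k'.2 ≠ 0 := by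
        by_contra hcon
        push_neg at hcon
        have e1 : k.1 = k'.1 := by omega
        have e2 : k.2 = k'.2 := by omega
        exact hne (Prod.ext e1 e2)
      have key : ∀ a : ℤ, a ≠ 0 → (1:ℤ) ≤ a^2 := by
        intro a ha
        have h1 := Int.one_le_abs ha
        have h3 : (1:ℤ)*1 ≤ |a| * |a| := mul_le_mul h1 h1 (by norm_num) (abs_nonneg _)
        have h5 : |a| * |a| = a^2 := by rw [← pow_two, sq_abs]
        linarith [h3, h5]
      have hab1 : (1:ℤ) ≤ (k.1-k'.1)^2 + (k.2-k'.2)^2 := by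
        rcases habne with h | h
        · linarith [key _ h, sq_nonneg (k.2-k'.2)]
        · linarith [key _ h, sq_nonneg (k.1-k'.1)]
      have htz : (k.1-k'.1)*j.1 + (k.2-k'.2)*j.2 = 0 := by linear_combination ht_eq
      have hid : ((-(k.1*j.2) + k.2*j.1) - (-(k'.1*j.2) + k'.2*j.1))^2
          + ((k.1-k'.1)*j.1 + (k.2-k'.2)*j.2)^2
          = ((k.1-k'.1)^2 + (k.2-k'.2)^2) * (j.1^2 + j.2^2) := by ring
      have htz2 : ((k.1-k'.1)*j.1 + (k.2-k'.2)*j.2)^2 = 0 := by rw [htz]; ring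
      have hΔu2 : (j.1^2 + j.2^2 : ℤ)
          ≤ ((-(k.1*j.2) + k.2*j.1) - (-(k'.1*j.2) + k'.2*j.1))^2 := by
        have hmul : (0:ℤ) ≤ ((k.1-k'.1)^2 + (k.2-k'.2)^2 - 1) * (j.1^2+j.2^2) :=
          mul_nonneg (by linarith [hab1]) (by linarith [hnI])
        have he : ((k.1-k'.1)^2 + (k.2-k'.2)^2 - 1) * (j.1^2+j.2^2)
            = ((k.1-k'.1)^2 + (k.2-k'.2)^2) * (j.1^2+j.2^2) - (j.1^2+j.2^2) := by ring
        linarith [hid, htz2, hmul, he]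
      set U : ℝ := ((-(k.1*j.2) + k.2*j.1 : ℤ) : ℝ) with hU_def
      set U' : ℝ := ((-(k'.1*j.2) + k'.2*j.1 : ℤ) : ℝ) with hU'_def
      have hΔuR : n ≤ (U - U')^2 := by
        have hcast : ((j.1^2 + j.2^2 : ℤ) : ℝ)
            ≤ (((-(k.1*j.2)+k.2*j.1) - (-(k'.1*j.2)+k'.2*j.1) : ℤ) : ℝ)^2 := by
          exact_mod_cast hΔu2
        rw [hn_def, hU_def, hU'_def]
        push_cast at hcast ⊢
        linarith [hcast]
      have hf1 : ((⌊U/sn⌋:ℤ):ℝ) ≤ U/sn := Int.floor_le _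
      have hf2 : U/sn < (⌊U/sn⌋:ℤ) + 1 := Int.lt_floor_add_one _
      have hf3 : ((⌊U'/sn⌋:ℤ):ℝ) ≤ U'/sn := Int.floor_le _
      have hf4 : U'/sn < (⌊U'/sn⌋:ℤ) + 1 := Int.lt_floor_add_one _
      have hmm : (⌊U/sn⌋ : ℤ) = ⌊U'/sn⌋ := hm_eq
      rw [hmm] at hf1 hf2
      have hx1 : U/sn - U'/sn < 1 := by linarith
      have hx2 : -1 < U/sn - U'/sn := by linarith
      have hsne : sn ≠ 0 := ne_of_gt hsn0
      have hUU : U - U' = sn * (U/sn - U'/sn) := by field_simp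
      have hlt : (U - U')^2 < n := by
        rw [hUU]
        calc (sn * (U/sn - U'/sn))^2 = sn^2 * (U/sn - U'/sn)^2 := by ring
          _ < sn^2 * 1 := by
              apply mul_lt_mul_of_pos_left _ (pow_pos hsn0 2)
              rw [sq_lt_one_iff_abs_lt_one]
              exact abs_lt.mpr ⟨hx2, hx1⟩
          _ = n := by rw [hsnsq]; ring
      linarith
    -- image is contained in the box
    have himg : Φ '' S ⊆ (T : Set (ℤ × ℤ)) := by
      rintro p ⟨k, hk, rfl⟩
      simp only [hS_def, Set.mem_setOf_eq] at hk
      obtain ⟨hk1, hk2, hk3⟩ := hk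
      simp only [hΦ_def, hT_def, Finset.coe_product, Set.mem_prod, Finset.mem_coe,
        Finset.mem_Icc, Finset.mem_union]
      set t : ℤ := k.1*j.1 + k.2*j.2 with ht_def
      set u : ℤ := -(k.1*j.2) + k.2*j.1 with hu_def
      have htR : ((t:ℤ):ℝ) = (k.1:ℝ)*(j.1:ℝ) + (k.2:ℝ)*(j.2:ℝ) := by
        rw [ht_def]; push_cast; ring
      have htB : |((t:ℤ):ℝ)| < B := by rw [htR]; exact hk3
      have htabs := abs_lt.mp htB
      have hident : ((t:ℤ):ℝ)^2 + ((u:ℤ):ℝ)^2 = ((k.1:ℝ)^2 + (k.2:ℝ)^2) * n := by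
        rw [ht_def, hu_def, hn_def]; push_cast; ring
      have hu_ub : ((u:ℤ):ℝ)^2 ≤ bb^2 := by
        rw [hbb2]
        have p1 := mul_le_mul_of_nonneg_right hk2 hn0.le
        have e : (μ+L)*n = n*(μ+L) := by ring
        linarith [sq_nonneg ((t:ℤ):ℝ), p1, hident, e]
      have hu_lb : a0^2 < ((u:ℤ):ℝ)^2 := by
        rw [ha02]
        have p1 := mul_lt_mul_of_pos_right hk1 hn0
        have ht2 : ((t:ℤ):ℝ)^2 < B^2 := sq_lt_sq' htabs.1 htabs.2
        have e : μ*n = n*μ := by ring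
        linarith [p1, ht2, hident, e]
      constructor
      · constructor
        · have : -((tm:ℤ):ℝ) ≤ ((t:ℤ):ℝ) := by
            have h1 : -((t:ℤ):ℝ) < B := by linarith
            have h2 : B ≤ ((tm:ℤ):ℝ) := by rw [htm_def]; exact Int.le_ceil B
            push_cast
            push_cast at h1 h2
            linarith
          exact_mod_cast this
        · have : ((t:ℤ):ℝ) ≤ ((tm:ℤ):ℝ) := by
            have h2 : B ≤ ((tm:ℤ):ℝ) := by rw [htm_def]; exact Int.le_ceil B
            linarith
          exact_mod_cast this
      · -- u part
        have huabs_ub : |((u:ℤ):ℝ)| ≤ bb := by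
          rw [← Real.sqrt_sq_eq_abs, show bb = Real.sqrt (bb^2) from (Real.sqrt_sq hbb0).symm]
          exact Real.sqrt_le_sqrt hu_ub
        have huabs_lb : a0 < |((u:ℤ):ℝ)| := by
          rw [← Real.sqrt_sq_eq_abs, show a0 = Real.sqrt (a0^2) from (Real.sqrt_sq ha00).symm]
          exact Real.sqrt_lt_sqrt (sq_nonneg a0) hu_lb
        have habs := abs_le.mp huabs_ub
        have hune : ((u:ℤ):ℝ) ≠ 0 := by
          intro h0
          rw [h0, abs_zero] at huabs_lb
          linarith
        rcases lt_or_gt_of_ne hune with hneg | hpos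
        · -- u < 0 : second interval
          right
          have h1 : -bb ≤ ((u:ℤ):ℝ) := habs.1
          have h2 : ((u:ℤ):ℝ) < -a0 := by
            rw [abs_of_neg hneg] at huabs_lb
            linarith
          constructor
          · rw [hm3_def]
            exact Int.floor_mono ((div_le_div_iff_of_pos_right hsn0).mpr h1)
          · have hlt : ((u:ℤ):ℝ)/sn < -a0/sn := (div_lt_div_iff_of_pos_right hsn0).mpr h2
            have hfl : ((⌊((u:ℤ):ℝ)/sn⌋:ℤ):ℝ) ≤ ((u:ℤ):ℝ)/sn := Int.floor_le _
            have hce : -a0/sn ≤ ((m4:ℤ):ℝ) := by rw [hm4_def]; exact Int.le_ceil _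
            have : ((⌊((u:ℤ):ℝ)/sn⌋:ℤ):ℝ) < ((m4:ℤ):ℝ) := by linarith
            exact_mod_cast this.le
        · -- u > 0 : first interval
          left
          have h1 : a0 < ((u:ℤ):ℝ) := by
            rw [abs_of_pos hpos] at huabs_lb
            exact huabs_lb
          have h2 : ((u:ℤ):ℝ) ≤ bb := habs.2
          constructor
          · have hlt : a0/sn < ((u:ℤ):ℝ)/sn := (div_lt_div_iff_of_pos_right hsn0).mpr h1
            have hfl : ((u:ℤ):ℝ)/sn < (⌊((u:ℤ):ℝ)/sn⌋:ℤ) + 1 := Int.lt_floor_add_one _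
            have hce : ⌈a0/sn⌉ ≤ ⌊((u:ℤ):ℝ)/sn⌋ + 1 := by
              apply Int.ceil_le.mpr
              push_cast
              linarith
            rw [hm1_def]
            omega
          · rw [hm2_def]
            exact Int.floor_mono ((div_le_div_iff_of_pos_right hsn0).mpr h2)
    -- cardinality counting
    have hcount : (S.ncard : ℝ) ≤ (T.card : ℝ) := by
      have h1 : (Φ '' S).ncard = S.ncard := Set.ncard_image_of_injOn hinj
      have h2 : (Φ '' S).ncard ≤ ((T : Set (ℤ × ℤ))).ncard :=
        Set.ncard_le_ncard himg (T.finite_toSet)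
      rw [Set.ncard_coe_finset] at h2
      rw [← h1]
      exact_mod_cast h2
    have hX0 : (0:ℝ) ≤ (bb - a0)/sn := div_nonneg (by linarith) hsn0.le
    have hTcard : (T.card : ℝ) ≤ (2*B+3) * (2*((bb-a0)/sn) + 5) := by
      rw [hT_def, Finset.card_product]
      push_cast
      have hA : ((Finset.Icc (-tm) tm).card : ℝ) ≤ 2*B+3 := by
        apply card_Icc_le_real
        · have hc := Int.ceil_lt_add_one B
          rw [htm_def]
          push_cast
          linarith
        · linarith
      have hc1 : ((Finset.Icc m1 m2).card : ℝ) ≤ (bb-a0)/sn + 2 := by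
        apply card_Icc_le_real
        · have hf : ((m2:ℤ):ℝ) ≤ bb/sn := by rw [hm2_def]; exact Int.floor_le _
          have hcc : a0/sn ≤ ((⌈a0/sn⌉:ℤ):ℝ) := Int.le_ceil _
          rw [hm1_def]
          push_cast
          rw [sub_div]
          push_cast at hf
          linarith
        · linarith
      have hc2 : ((Finset.Icc m3 m4).card : ℝ) ≤ (bb-a0)/sn + 3 := by
        apply card_Icc_le_real
        · have hf : -bb/sn - 1 < ((m3:ℤ):ℝ) := by
            rw [hm3_def]
            have := Int.lt_floor_add_one (-bb/sn)
            push_cast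
            linarith
          have hcc : ((m4:ℤ):ℝ) < -a0/sn + 1 := by
            rw [hm4_def]; exact Int.ceil_lt_add_one _
          rw [sub_div]
          push_cast at hf hcc
          have e1 : -bb/sn = -(bb/sn) := by ring
          have e2 : -a0/sn = -(a0/sn) := by ring
          rw [e1] at hf
          rw [e2] at hcc
          linarith
        · linarith
      have hU : (((Finset.Icc m1 m2) ∪ (Finset.Icc m3 m4)).card : ℝ)
          ≤ 2*((bb-a0)/sn) + 5 := by
        have hc := Finset.card_union_le (Finset.Icc m1 m2) (Finset.Icc m3 m4)
        have : (((Finset.Icc m1 m2) ∪ (Finset.Icc m3 m4)).card : ℝ)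
            ≤ ((Finset.Icc m1 m2).card : ℝ) + ((Finset.Icc m3 m4).card : ℝ) := by
          exact_mod_cast hc
        linarith
      exact mul_le_mul hA hU (Nat.cast_nonneg _) (by linarith)
    -- final numeric estimates
    have hs1' : κ ≤ (1/16)*(Real.sqrt μ * κ) := by
      have := mul_le_mul_of_nonneg_right hsqμ hκ0.le
      linarith
    have hs2' : κ^2 ≤ (1/16)*(Real.sqrt μ * κ) := by
      have h := mul_le_mul_of_nonneg_right H4'' hκ0.le
      have e : κ^2 = κ*κ := by ring
      have e2 : 16*κ*κ = 16*(κ*κ) := by ring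
      linarith
    have hPmid : n*L + B^2 ≤ n*((9/8)*(Real.sqrt μ * κ)) := by
      have t1 : n*L ≤ n*((Real.sqrt μ + 1)*κ) := mul_le_mul_of_nonneg_left hL_ub hn0.le
      have t3 : n*κ ≤ n*((1/16)*(Real.sqrt μ * κ)) := mul_le_mul_of_nonneg_left hs1' hn0.le
      have t4 : B^2 ≤ (1/16)*(Real.sqrt μ * κ) := le_trans hB2κ hs2'
      have t5 : (1/16)*(Real.sqrt μ * κ) ≤ n*((1/16)*(Real.sqrt μ * κ)) :=
        le_mul_of_one_le_left
          (mul_nonneg (by norm_num) (mul_nonneg hsqμ0.le hκ0.le)) hn1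
      have e1 : n*((Real.sqrt μ + 1)*κ) = n*(Real.sqrt μ * κ) + n*κ := by ring
      have e2 : n*((1/16)*(Real.sqrt μ * κ)) = (1/16)*(n*(Real.sqrt μ * κ)) := by ring
      have e3 : n*((9/8)*(Real.sqrt μ * κ)) = (9/8)*(n*(Real.sqrt μ * κ)) := by ring
      linarith [t1, t3, t4, t5, e1, e2, e3]
    have hP : (bb - a0) * ((17/10) * (sn * Real.sqrt μ)) ≤ (9/8)*(sn^2 * Real.sqrt μ)*κ := by
      calc (bb - a0) * ((17/10) * (sn * Real.sqrt μ)) ≤ n*L + B^2 := hdiff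
        _ ≤ n*((9/8)*(Real.sqrt μ * κ)) := hPmid
        _ = (9/8)*(sn^2 * Real.sqrt μ)*κ := by rw [hsnsq]; ring
    have hXdiff : bb - a0 ≤ (45/68)*κ*sn := by
      have hpos : (0:ℝ) < (17/10) * (sn * Real.sqrt μ) :=
        mul_pos (by norm_num) (mul_pos hsn0 hsqμ0)
      apply le_of_mul_le_mul_right _ hpos
      have e : (45/68)*κ*sn * ((17/10) * (sn * Real.sqrt μ))
          = (9/8)*(sn^2 * Real.sqrt μ)*κ := by ring
      linarith [hP, e]
    have hXdiv : (bb - a0)/sn ≤ (45/68)*κ := by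
      rw [div_le_iff₀ hsn0]
      linarith
    have hUκ : 2*((bb-a0)/sn) + 5 ≤ (3/2)*κ := by linarith
    have htκ : 2*B+3 ≤ 2*κ := by rw [hB_def]; linarith
    calc (S.ncard : ℝ) ≤ (T.card : ℝ) := hcount
      _ ≤ (2*B+3) * (2*((bb-a0)/sn) + 5) := hTcard
      _ ≤ (2*κ) * ((3/2)*κ) := mul_le_mul htκ hUκ (by linarith) (by linarith)
      _ = 3*κ^2 := by ring
      _ ≤ 4*κ^2 := by linarith [sq_nonneg κ]
      _ = 4 * C^2 * μ ^ (2*s) := by rw [hκsq]; ring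
  obtain ⟨μ₀, hμ₀⟩ := eventually_atTop.mp Hall
  exact ⟨μ₀, hμ₀⟩
end
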